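/- arXiv:2406.05384 — 8 statements merged into one kernel-verified Lean document; each statement's English description precedes it below -/
import Mathlib

section
/- The beta invariant of the uniform matroid U_{r,n} (rank r on n elements, with 0 < r < n) equals the binomial coefficient C(n-2, r-1). -/
/-!
Deleting an element of `U_{r,n}` leaves `U_{r,n-1}` and contracting it leaves `U_{r-1,n-1}`, so
deletion–contraction turns `β(U_{r,n})` into Pascal's recurrence. The boundary matroids are
`U_{0,m}` (all loops) and `U_{m,m}` (all coloops), where `β` vanishes except at `U_{1,1}`; these
boundary values are exactly those of `C(n-2, r-1)`.
-/

open Matroid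

/-- Deletion of a set of elements from a matroid. -/
def mDelete (M : Matroid ℕ) (D : Set ℕ) : Matroid ℕ := M ↾ (M.E \ D)

/-- Contraction of a set of elements, defined by duality: `M ／ C = (M✶ ＼ C)✶`. -/
def mContract (M : Matroid ℕ) (C : Set ℕ) : Matroid ℕ := (mDelete M✶ C)✶

/-- `e` is a loop of `M`: an element of the ground set whose singleton is dependent. -/
def IsLoopE (M : Matroid ℕ) (e : ℕ) : Prop := e ∈ M.E ∧ ¬ M.Indep {e}

/-- `e` is a coloop of `M`: an element of the ground set lying in every base. -/
def IsColoopE (M : Matroid ℕ) (e : ℕ) : Prop := e ∈ M.E ∧ ∀ B, M.IsBase B → e ∈ B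

namespace Matroid

open Set

variable {α : Type*} {M : Matroid α} {r : ℕ} {e : α} {E I X D : Set α}

def IsUniform (M : Matroid α) (r : ℕ) : Prop :=
  ∀ B, M.IsBase B ↔ B ⊆ M.E ∧ B.encard = r

namespace IsUniform

lemma indep_iff (h : M.IsUniform r) (hr : r ≤ M.E.encard) :
    M.Indep I ↔ I ⊆ M.E ∧ I.encard ≤ r := by
  constructor
  · intro hI
    obtain ⟨B, hB, hIB⟩ := hI.exists_isBase_superset
    obtain ⟨hBE, hBr⟩ := (h B).1 hB
    exact ⟨hIB.trans hBE, hBr ▸ encard_le_encard hIB⟩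
  · rintro ⟨hIE, hIr⟩
    obtain ⟨B, hIB, hBE, hBr⟩ := exists_superset_subset_encard_eq hIE hIr hr
    exact ((h B).2 ⟨hBE, hBr⟩).indep.subset hIB

lemma isBasis_iff (h : M.IsUniform r) (hX : X ⊆ M.E) (hr : r ≤ X.encard) :
    M.IsBasis I X ↔ I ⊆ X ∧ I.encard = r := by
  have hrE : r ≤ M.E.encard := hr.trans (encard_le_encard hX)
  rw [Matroid.isBasis_iff hX]
  constructor
  · rintro ⟨hI, hIX, hmax⟩
    obtain ⟨J, hIJ, hJX, hJr⟩ :=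
      exists_superset_subset_encard_eq hIX ((h.indep_iff hrE).1 hI).2 hr
    have hJ : M.Indep J := (h.indep_iff hrE).2 ⟨hJX.trans hX, hJr.le⟩
    exact ⟨hIX, hmax J hJ hIJ hJX ▸ hJr⟩
  · rintro ⟨hIX, hIr⟩
    refine ⟨(h.indep_iff hrE).2 ⟨hIX.trans hX, hIr.le⟩, hIX, fun J hJ hIJ _ ↦ ?_⟩
    exact (finite_of_encard_eq_coe hIr).eq_of_subset_of_encard_le hIJ
      (hIr ▸ ((h.indep_iff hrE).1 hJ).2)

lemma delete (h : M.IsUniform r) (hr : r ≤ (M.E \ D).encard) : (M ＼ D).IsUniform r :=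
  fun B ↦ by rw [delete_isBase_iff, h.isBasis_iff sdiff_subset hr, delete_ground]

lemma isNonloop (h : M.IsUniform (r + 1)) (hr : (r + 1 : ℕ) ≤ M.E.encard) (he : e ∈ M.E) :
    M.IsNonloop e := by
  rw [← indep_singleton, h.indep_iff hr, singleton_subset_iff, encard_singleton]
  exact ⟨he, by simp⟩

lemma contract_singleton (h : M.IsUniform (r + 1)) (hr : (r + 1 : ℕ) ≤ M.E.encard)
    (he : e ∈ M.E) : (M ／ {e}).IsUniform r := by
  intro B
  rw [(h.isNonloop hr he).indep.contract_isBase_iff, h, contract_ground, union_singleton,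
    insert_subset_iff, subset_sdiff, disjoint_singleton_right]
  by_cases heB : e ∈ B
  · simp [heB]
  · simp [encard_insert_of_notMem heB, he, heB]

lemma not_isColoop (h : M.IsUniform r) (hr : r ≤ (M.E \ {e}).encard) : ¬ M.IsColoop e := by
  obtain ⟨B, hB, hBr⟩ := exists_subset_encard_eq hr
  rw [isColoop_iff_forall_mem_isBase]
  intro hall
  exact (hB (hall ((h B).2 ⟨hB.trans sdiff_subset, hBr⟩))).2 rfl

lemma eq_loopyOn (h : M.IsUniform 0) : M = loopyOn M.E :=
  ext_isBase rfl fun B hB ↦ by simp [h B, hB]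

lemma eq_freeOn (h : M.IsUniform r) (hE : M.E.encard = r) : M = freeOn M.E :=
  eq_freeOn_iff.2 ⟨rfl, ((h M.E).2 ⟨subset_rfl, hE⟩).indep⟩

end IsUniform

/-- The bound `2 ≤ |E|` keeps the loop/coloop axiom consistent with `β(U_{1,1}) = 1`. -/
structure IsBetaInvariant (β : Matroid α → ℤ) : Prop where
  loopyOn_singleton : ∀ e, β (loopyOn {e}) = 0
  freeOn_singleton : ∀ e, β (freeOn {e}) = 1
  eq_zero_of_isLoop_or_isColoop : ∀ M : Matroid α, 2 ≤ M.E.encard →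
    (∃ e, M.IsLoop e ∨ M.IsColoop e) → β M = 0
  eq_contract_add_delete : ∀ (M : Matroid α) (e : α), e ∈ M.E → ¬ M.IsLoop e → ¬ M.IsColoop e →
    β M = β (M ／ {e}) + β (M ＼ {e})

namespace IsBetaInvariant

variable {β : Matroid α → ℤ} {n : ℕ}

lemma loopyOn_eq_zero (hβ : IsBetaInvariant β) (hE : E.encard = n) (hn : 0 < n) :
    β (loopyOn E) = 0 := by
  obtain rfl | hn2 : n = 1 ∨ 2 ≤ n := by omega
  · obtain ⟨e, rfl⟩ := encard_eq_one.1 hE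
    exact hβ.loopyOn_singleton e
  obtain ⟨e, he⟩ : E.Nonempty := nonempty_of_encard_ne_zero (by simp [hE]; omega)
  exact hβ.eq_zero_of_isLoop_or_isColoop _ (by simp [hE]; exact_mod_cast hn2)
    ⟨e, .inl (loopyOn_isLoop_iff.2 he)⟩

lemma freeOn_eq_choose (hβ : IsBetaInvariant β) (hE : E.encard = n) (hn : 0 < n) :
    β (freeOn E) = (n - 2).choose (n - 1) := by
  obtain rfl | hn2 : n = 1 ∨ 2 ≤ n := by omega
  · obtain ⟨e, rfl⟩ := encard_eq_one.1 hE
    simpa using hβ.freeOn_singleton e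
  obtain ⟨e, he⟩ : E.Nonempty := nonempty_of_encard_ne_zero (by simp [hE]; omega)
  rw [Nat.choose_eq_zero_of_lt (by omega), Nat.cast_zero]
  exact hβ.eq_zero_of_isLoop_or_isColoop _ (by simp [hE]; exact_mod_cast hn2)
    ⟨e, .inr (by rw [← dual_isLoop_iff_isColoop, freeOn_dual_eq, loopyOn_isLoop_iff]; exact he)⟩

/-- Including `r = n` lets the induction close: `C(n-2, n-1)` is `0`, or `1` when `n = 1`
because of truncated subtraction. -/
lemma eq_choose_of_isUniform (hβ : IsBetaInvariant β) {r : ℕ} (hr : 0 < r) (hrn : r ≤ n)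
    {M : Matroid α} (hE : M.E.encard = n) (hM : M.IsUniform r) :
    β M = (n - 2).choose (r - 1) := by
  induction n generalizing r M with
  | zero => omega
  | succ n ih =>
  obtain rfl | hrn := hrn.eq_or_lt
  · rw [hM.eq_freeOn hE, hβ.freeOn_eq_choose hE hr]
  obtain ⟨k, rfl⟩ : ∃ k, r = k + 1 := ⟨r - 1, by omega⟩
  obtain ⟨e, he⟩ : M.E.Nonempty := nonempty_of_encard_ne_zero (by simp [hE])
  have hE' : (M.E \ {e}).encard = n := by
    have := encard_sdiff_singleton_add_one he
    rw [hE, Nat.cast_succ] at this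
    simpa using this
  have hkE : ((k + 1 : ℕ) : ℕ∞) ≤ M.E.encard := by rw [hE]; exact_mod_cast hrn.le
  have hkE' : ((k + 1 : ℕ) : ℕ∞) ≤ (M.E \ {e}).encard := by rw [hE']; exact_mod_cast (by omega)
  have hdel : β (M ＼ {e}) = (n - 2).choose k := ih hr (by omega) hE' (hM.delete hkE')
  have hcon : β (M ／ {e}) = if k = 0 then 0 else (n - 2).choose (k - 1) := by
    have hC := hM.contract_singleton hkE he
    split_ifs with hk
    · subst hk
      rw [hC.eq_loopyOn]
      exact hβ.loopyOn_eq_zero hE' (by omega)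
    · exact ih (by omega) (by omega) hE' hC
  rw [hβ.eq_contract_add_delete M e he (hM.isNonloop hkE he).not_isLoop (hM.not_isColoop hkE'),
    hcon, hdel]
  rcases k with _ | j
  · simp
  · obtain ⟨m, rfl⟩ : ∃ m, n = m + 2 := ⟨n - 2, by omega⟩
    simp [Nat.choose_succ_succ']

end IsBetaInvariant

end Matroid

lemma isLoopE_iff_isLoop {M : Matroid ℕ} {e : ℕ} : IsLoopE M e ↔ M.IsLoop e := by
  rw [IsLoopE, indep_singleton]
  exact ⟨fun ⟨he, h⟩ ↦ (not_isNonloop_iff he).1 h, fun h ↦ ⟨h.mem_ground, h.not_isNonloop⟩⟩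

lemma isColoopE_iff_isColoop {M : Matroid ℕ} {e : ℕ} : IsColoopE M e ↔ M.IsColoop e := by
  rw [IsColoopE, isColoop_iff_forall_mem_isBase]
  refine ⟨fun h B hB ↦ h.2 B hB, fun h ↦ ⟨?_, fun B hB ↦ h hB⟩⟩
  obtain ⟨B, hB⟩ := M.exists_isBase
  exact hB.subset_ground (h hB)

/-- The beta invariant of the uniform matroid `U_{r,n}` (rank `r` on `{1,…,n}`, `0 < r < n`)
equals `C(n-2, r-1)`.  Here `β` is any function satisfying the defining properties of the
beta invariant: `β(U_{0,1}) = 0`, `β(U_{1,1}) = 1`, `β(M) = 0` whenever `M` has at least two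
elements and a loop or a coloop, and deletion–contraction. -/
theorem beta_uniform (β : Matroid ℕ → ℤ)
    (hβ0 : ∀ e : ℕ, β (Matroid.loopyOn {e}) = 0)
    (hβ1 : ∀ e : ℕ, β (Matroid.freeOn {e}) = 1)
    (hβlc : ∀ M : Matroid ℕ, 2 ≤ M.E.encard → (∃ e, IsLoopE M e ∨ IsColoopE M e) → β M = 0)
    (hβdc : ∀ (M : Matroid ℕ) (i : ℕ), i ∈ M.E → ¬ IsLoopE M i → ¬ IsColoopE M i →
      β M = β (mContract M {i}) + β (mDelete M {i}))
    (r n : ℕ) (hr : 0 < r) (hrn : r < n)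
    (M : Matroid ℕ) (hE : M.E = Set.Icc 1 n)
    (hbase : ∀ B : Set ℕ, M.IsBase B ↔ B ⊆ Set.Icc 1 n ∧ B.encard = r) :
    β M = (n - 2).choose (r - 1) := by
  have hβ : IsBetaInvariant β :=
    { loopyOn_singleton := hβ0
      freeOn_singleton := hβ1
      eq_zero_of_isLoop_or_isColoop := fun M hM ⟨e, he⟩ ↦
        hβlc M hM ⟨e, by rwa [isLoopE_iff_isLoop, isColoopE_iff_isColoop]⟩
      eq_contract_add_delete := fun M e he hl hc ↦
        hβdc M e he (by rwa [isLoopE_iff_isLoop]) (by rwa [isColoopE_iff_isColoop]) }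
  have hcard : M.E.encard = n := by simp [hE, ← (Set.finite_Icc 1 n).cast_ncard_eq]
  exact hβ.eq_choose_of_isUniform hr hrn.le hcard fun B ↦ by rw [hbase, hE]
end

section
/- The beta invariant of the minimal matroid T_{r,n} equals 1, for 0 < r < n. -/
open Matroid

/-!
Apply deletion–contraction at the last element `n` of `T_{r,n}`, which is neither a loop nor a
coloop. If `n > r + 1`, then `n` is parallel to `r + 1`, so `T_{r,n} / n` has the loop `r + 1`
while `T_{r,n} \ n = T_{r,n-1}`. If `n = r + 1`, then `T_{r,n} = U_{r,r+1}`, so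
`T_{r,n} / n = T_{r-1,r}` while `T_{r,n} \ n` is free. Induction on `n` ends at `T_{1,2}`, whose
minors are `U_{0,1}` and `U_{1,1}`.
-/

open Set

def IsMinimalBase (r n : ℕ) (B : Set ℕ) : Prop :=
  B ⊆ Icc 1 n ∧ B.encard = r ∧ (B ∩ Ioc r n).encard ≤ 1

/-- `M` is `T_{r,n}`, in which `r + 1, …, n` form the parallel class. -/
structure IsMinimalMatroid (M : Matroid ℕ) (r n : ℕ) : Prop where
  ground_eq : M.E = Icc 1 n
  isBase_iff : ∀ B, M.IsBase B ↔ IsMinimalBase r n B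

lemma encard_Icc_one (n : ℕ) : (Icc 1 n).encard = n := by
  rw [← (finite_Icc 1 n).cast_ncard_eq, ncard_Icc_nat, Nat.add_sub_cancel]

section IsMinimalBase

variable {r n : ℕ} {B : Set ℕ}

lemma isMinimalBase_Icc (hrn : r ≤ n) : IsMinimalBase r n (Icc 1 r) := by
  refine ⟨Icc_subset_Icc_right hrn, encard_Icc_one r, ?_⟩
  have : Icc 1 r ∩ Ioc r n = ∅ := by ext; grind
  simp [this]

lemma isMinimalBase_insert_Icc (hrn : r < n) : IsMinimalBase (r + 1) n (insert n (Icc 1 r)) := by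
  have hn : n ∉ Icc 1 r := by grind
  refine ⟨insert_subset (by grind) (Icc_subset_Icc_right hrn.le), ?_, ?_⟩
  · rw [encard_insert_of_notMem hn, encard_Icc_one]; rfl
  · exact (encard_le_encard fun x hx => by grind).trans (encard_singleton n).le

lemma isMinimalBase_self_iff : IsMinimalBase n n B ↔ B = Icc 1 n := by
  refine ⟨fun hB => (finite_Icc 1 n).eq_of_subset_of_encard_le' hB.1 ?_, ?_⟩
  · rw [hB.2.1, encard_Icc_one]
  · rintro rfl; exact isMinimalBase_Icc le_rfl

lemma isMinimalBase_zero_iff : IsMinimalBase 0 n B ↔ B = ∅ := by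
  refine ⟨fun hB => encard_eq_zero.mp hB.2.1, ?_⟩
  rintro rfl; exact ⟨empty_subset _, encard_empty, by simp⟩

lemma isMinimalBase_succ_and_disjoint_iff :
    IsMinimalBase r (n + 1) B ∧ Disjoint B {n + 1} ↔ IsMinimalBase r n B := by
  rw [disjoint_singleton_right]
  constructor
  · rintro ⟨⟨hB, hcard, htail⟩, hn⟩
    exact ⟨fun x hx => by grind, hcard,
      (encard_le_encard (inter_subset_inter_right _ (Ioc_subset_Ioc_right n.le_succ))).trans htail⟩
  · rintro ⟨hB, hcard, htail⟩
    exact ⟨⟨hB.trans (Icc_subset_Icc_right n.le_succ), hcard,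
      (encard_le_encard fun x hx => by grind).trans htail⟩, fun h => by grind⟩

lemma isMinimalBase_union_singleton_iff :
    IsMinimalBase (r + 1) (r + 2) (B ∪ {r + 2}) ∧ Disjoint B {r + 2} ↔
      IsMinimalBase r (r + 1) B := by
  have htail : ∀ {m} (X : Set ℕ), (X ∩ Ioc m (m + 1)).encard ≤ 1 := fun {m} X =>
    (encard_le_encard fun x hx => by grind).trans (encard_singleton (m + 1)).le
  constructor
  · rintro ⟨⟨hB, hcard, -⟩, hdisj⟩
    rw [encard_union_eq hdisj, encard_singleton, Nat.cast_succ] at hcard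
    exact ⟨fun x hx => by grind [hB (mem_union_left _ hx)],
      WithTop.add_right_cancel ENat.one_ne_top hcard, htail B⟩
  · rintro ⟨hB, hcard, -⟩
    have hdisj : Disjoint B {r + 2} := disjoint_singleton_right.mpr fun h => by grind
    refine ⟨⟨union_subset (hB.trans (Icc_subset_Icc_right (by omega))) (by grind), ?_, htail _⟩,
      hdisj⟩
    rw [encard_union_eq hdisj, encard_singleton, hcard, Nat.cast_succ]

lemma not_pair_subset_of_isMinimalBase (hrn : r + 1 < n) (hB : IsMinimalBase r n B) :
    ¬ {r + 1, n} ⊆ B := by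
  intro hpair
  have htail : ({r + 1, n} : Set ℕ) ⊆ B ∩ Ioc r n := fun x hx => by grind
  have htwo := (encard_le_encard htail).trans hB.2.2
  rw [encard_pair (by omega)] at htwo
  norm_num at htwo

end IsMinimalBase

lemma mDelete_eq_delete (M : Matroid ℕ) (D : Set ℕ) : mDelete M D = M ＼ D := rfl

lemma mContract_eq_contract (M : Matroid ℕ) (C : Set ℕ) : mContract M C = M ／ C := rfl

lemma isColoopE_freeOn {E : Set ℕ} {e : ℕ} (he : e ∈ E) : IsColoopE (freeOn E) e :=
  ⟨he, fun _ hB => freeOn_isBase_iff.1 hB ▸ he⟩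

namespace IsMinimalMatroid

variable {M : Matroid ℕ} {r n : ℕ}

lemma isBase_Icc (h : IsMinimalMatroid M r n) (hrn : r ≤ n) : M.IsBase (Icc 1 r) :=
  (h.isBase_iff _).2 (isMinimalBase_Icc hrn)

lemma indep_singleton_last (h : IsMinimalMatroid M r n) (hr : 0 < r) (hrn : r ≤ n) :
    M.Indep {n} := by
  obtain ⟨s, rfl⟩ := Nat.exists_eq_succ_of_ne_zero hr.ne'
  exact ((h.isBase_iff _).2 (isMinimalBase_insert_Icc hrn)).indep.subset
    (singleton_subset_iff.2 (mem_insert _ _))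

lemma not_isLoopE_last (h : IsMinimalMatroid M r n) (hr : 0 < r) (hrn : r ≤ n) :
    ¬ IsLoopE M n :=
  fun hl => hl.2 (h.indep_singleton_last hr hrn)

lemma not_isColoopE_last (h : IsMinimalMatroid M r n) (hrn : r < n) : ¬ IsColoopE M n :=
  fun hc => by grind [hc.2 _ (h.isBase_Icc hrn.le)]

lemma ground_diff_last (h : IsMinimalMatroid M r (n + 1)) : M.E \ {n + 1} = Icc 1 n := by
  rw [h.ground_eq]; ext; grind

lemma delete_last (h : IsMinimalMatroid M r (n + 1)) (hrn : r ≤ n) :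
    IsMinimalMatroid (mDelete M {n + 1}) r n where
  ground_eq := h.ground_diff_last
  isBase_iff B := by
    have hD : M.Coindep {n + 1} :=
      coindep_iff_subset_compl_isBase.2 ⟨_, h.isBase_Icc (by omega), by rw [h.ground_eq]; grind⟩
    rw [mDelete_eq_delete, hD.delete_isBase_iff, h.isBase_iff,
      isMinimalBase_succ_and_disjoint_iff]

lemma contract_last (h : IsMinimalMatroid M (r + 1) (r + 2)) :
    IsMinimalMatroid (mContract M {r + 2}) r (r + 1) where
  ground_eq := h.ground_diff_last
  isBase_iff B := by
    rw [mContract_eq_contract, (h.indep_singleton_last r.succ_pos (by omega)).contract_isBase_iff,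
      h.isBase_iff, isMinimalBase_union_singleton_iff]

lemma isLoopE_contract_last (h : IsMinimalMatroid M r (n + 1)) (hr : 0 < r) (hrn : r < n) :
    IsLoopE (mContract M {n + 1}) (r + 1) := by
  rw [IsLoopE, mContract_eq_contract, contract_ground, h.ground_diff_last,
    (h.indep_singleton_last hr (by omega)).contract_indep_iff, singleton_union]
  refine ⟨by grind, fun hi => ?_⟩
  obtain ⟨B, hB, hpair⟩ := hi.2.exists_isBase_superset
  exact not_pair_subset_of_isMinimalBase (by omega) ((h.isBase_iff B).1 hB) hpair

lemma eq_freeOn (h : IsMinimalMatroid M n n) : M = freeOn (Icc 1 n) :=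
  ext_isBase h.ground_eq fun B _ => by rw [h.isBase_iff, isMinimalBase_self_iff, freeOn_isBase_iff]

lemma eq_loopyOn (h : IsMinimalMatroid M 0 n) : M = loopyOn (Icc 1 n) :=
  ext_isBase h.ground_eq fun B _ => by rw [h.isBase_iff, isMinimalBase_zero_iff, loopyOn_isBase_iff]

end IsMinimalMatroid

/-- The beta invariant of the minimal matroid `T_{r,n}` equals `1`, for `0 < r < n`.
`T_{r,n}` is characterised by its bases: the `r`-subsets `B` of `{1,…,n}` with
at most one element of `B` in `{r+1,…,n}` (equivalently, `U_{r,r+1}` with `n-r-1`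
elements added in parallel to one fixed element). -/
theorem beta_minimal_matroid (β : Matroid ℕ → ℤ)
    (hβ0 : ∀ e : ℕ, β (Matroid.loopyOn {e}) = 0)
    (hβ1 : ∀ e : ℕ, β (Matroid.freeOn {e}) = 1)
    (hβlc : ∀ M : Matroid ℕ, 2 ≤ M.E.encard → (∃ e, IsLoopE M e ∨ IsColoopE M e) → β M = 0)
    (hβdc : ∀ (M : Matroid ℕ) (i : ℕ), i ∈ M.E → ¬ IsLoopE M i → ¬ IsColoopE M i →
      β M = β (mContract M {i}) + β (mDelete M {i}))
    (r n : ℕ) (hr : 0 < r) (hrn : r < n)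
    (M : Matroid ℕ) (hE : M.E = Set.Icc 1 n)
    (hbase : ∀ B : Set ℕ, M.IsBase B ↔
      B ⊆ Set.Icc 1 n ∧ B.encard = r ∧ (B ∩ Set.Ioc r n).encard ≤ 1) :
    β M = 1 := by
  have hT : IsMinimalMatroid M r n := ⟨hE, hbase⟩
  clear hE hbase
  induction n generalizing r M with
  | zero => omega
  | succ n ih =>
    have hlast : n + 1 ∈ M.E := by rw [hT.ground_eq]; grind
    rw [hβdc M (n + 1) hlast (hT.not_isLoopE_last hr hrn.le) (hT.not_isColoopE_last hrn)]
    obtain hrn | rfl := (Nat.lt_succ_iff.1 hrn).lt_or_eq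
    · have hloop := hT.isLoopE_contract_last hr hrn
      have hground : 2 ≤ (mContract M {n + 1}).E.encard := by
        rw [mContract_eq_contract, contract_ground, hT.ground_diff_last, encard_Icc_one]
        exact_mod_cast (by omega : 2 ≤ n)
      rw [hβlc _ hground ⟨r + 1, .inl hloop⟩, ih r hr hrn _ (hT.delete_last hrn.le), zero_add]
    · rcases r with _ | _ | r
      · omega
      · rw [(hT.contract_last (r := 0)).eq_loopyOn, (hT.delete_last le_rfl).eq_freeOn, Icc_self,
          hβ0, hβ1, zero_add]
      · have hfree := (hT.delete_last le_rfl).eq_freeOn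
        have hground : 2 ≤ (mDelete M {r + 2 + 1}).E.encard := by
          rw [hfree, freeOn_ground, encard_Icc_one]; exact_mod_cast (by omega : 2 ≤ r + 2)
        rw [ih (r + 1) r.succ_pos (by omega) _ hT.contract_last,
          hβlc _ hground ⟨1, .inr (hfree ▸ isColoopE_freeOn (by grind))⟩, add_zero]
end

section
/- The beta invariant β(M) is non-negative for every matroid M. -/
open Matroid

/-- `M` decomposes as the direct sum of its restrictions to `A` and `B`, where `A, B` is a
partition of the ground set into two nonempty parts: a set is independent iff its
intersections with `A` and with `B` are both independent. -/
def IsDirectSumDecomp (M : Matroid ℕ) (A B : Set ℕ) : Prop :=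
  A.Nonempty ∧ B.Nonempty ∧ Disjoint A B ∧ A ∪ B = M.E ∧
    ∀ I ⊆ M.E, (M.Indep I ↔ M.Indep (I ∩ A) ∧ M.Indep (I ∩ B))

/-! Induction on the size of the ground set: a matroid with at most one element is empty, a
single loop or a single coloop, where `β` is `0` or `1`; a larger one either has a loop or
coloop, where `β` vanishes, or `β` is the sum of its values at two minors with one element
fewer. -/

lemma mContract_ground (M : Matroid ℕ) (C : Set ℕ) : (mContract M C).E = M.E \ C := by
  simp [mContract, mDelete]

lemma Matroid.eq_loopyOn_or_eq_freeOn_of_ground_eq_singleton {α : Type*} {M : Matroid α} {e : α}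
    (hE : M.E = {e}) : M = loopyOn {e} ∨ M = freeOn {e} := by
  by_cases he : M.Indep {e}
  · exact Or.inr (eq_freeOn_iff.mpr ⟨hE, he⟩)
  · refine Or.inl (eq_loopyOn_iff.mpr ⟨hE, fun X hX hXi => ?_⟩)
    rcases Set.subset_singleton_iff_eq.mp (hE ▸ hX) with rfl | rfl
    · rfl
    · exact absurd hXi he

theorem Matroid.induction_deleteContract (P : Matroid ℕ → Prop)
    (empty : P (emptyOn ℕ))
    (loop : ∀ e, P (loopyOn {e}))
    (coloop : ∀ e, P (freeOn {e}))
    (loop_or_coloop : ∀ M : Matroid ℕ, 2 ≤ M.E.encard → (∃ e, IsLoopE M e ∨ IsColoopE M e) → P M)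
    (deleteContract : ∀ (M : Matroid ℕ) (i : ℕ), i ∈ M.E → ¬ IsLoopE M i → ¬ IsColoopE M i →
      P (mContract M {i}) → P (mDelete M {i}) → P M)
    (M : Matroid ℕ) (hfin : M.E.Finite) : P M := by
  induction hn : M.E.ncard using Nat.strong_induction_on generalizing M with
  | _ n ih =>
  match n, hn with
  | 0, hn => rwa [ground_eq_empty_iff.mp ((Set.ncard_eq_zero hfin).mp hn)]
  | 1, hn =>
    obtain ⟨e, hE⟩ := Set.ncard_eq_one.mp hn
    rcases eq_loopyOn_or_eq_freeOn_of_ground_eq_singleton hE with rfl | rfl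
    exacts [loop e, coloop e]
  | m + 2, hn =>
    have h2 : 2 ≤ M.E.encard := by
      rw [← hfin.cast_ncard_eq, hn]
      exact_mod_cast Nat.le_add_left 2 m
    by_cases hlc : ∃ e, IsLoopE M e ∨ IsColoopE M e
    · exact loop_or_coloop M h2 hlc
    push Not at hlc
    obtain ⟨i, hi⟩ : M.E.Nonempty := (Set.ncard_pos hfin).mp (by omega)
    have hlt : (M.E \ {i}).ncard < m + 2 := hn ▸ Set.ncard_sdiff_singleton_lt_of_mem hi hfin
    refine deleteContract M i hi (hlc i).1 (hlc i).2 ?_ ?_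
    · exact ih _ hlt _ (by rw [mContract_ground]; exact hfin.sdiff) (by rw [mContract_ground])
    · exact ih _ hlt _ hfin.sdiff rfl

/-- The beta invariant `β(M)` is non-negative for every (finite) matroid `M`. -/
theorem beta_nonneg (β : Matroid ℕ → ℤ)
    (hβe : β (Matroid.emptyOn ℕ) = 0)
    (hβ0 : ∀ e : ℕ, β (Matroid.loopyOn {e}) = 0)
    (hβ1 : ∀ e : ℕ, β (Matroid.freeOn {e}) = 1)
    (hβlc : ∀ M : Matroid ℕ, 2 ≤ M.E.encard → (∃ e, IsLoopE M e ∨ IsColoopE M e) → β M = 0)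
    (hβdc : ∀ (M : Matroid ℕ) (i : ℕ), i ∈ M.E → ¬ IsLoopE M i → ¬ IsColoopE M i →
      β M = β (mContract M {i}) + β (mDelete M {i}))
    (M : Matroid ℕ) (hfin : M.E.Finite) :
    0 ≤ β M := by
  refine Matroid.induction_deleteContract (fun M => 0 ≤ β M) ?_ ?_ ?_ ?_ ?_ M hfin
  · exact hβe.ge
  · exact fun e => (hβ0 e).ge
  · exact fun e => by simp [hβ1 e]
  · exact fun M h2 hlc => (hβlc M h2 hlc).ge
  · intro M i hi hl hc hcon hdel
    rw [hβdc M i hi hl hc]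
    exact add_nonneg hcon hdel
end

section
/- For 0 < r < n, the minimal matroid T_{r,n} has exactly r(n-r) + 1 bases. -/
/-!
Sort the `r`-subsets `B` of `{1, …, n}` by how many points they take from `{r+1, …, n}`:
`B ↦ (B ∩ {1, …, r}, B ∩ {r+1, …, n})` is a bijection onto pairs of subsets of the right sizes,
so there is one subset taking no point there (`{1, …, r}` itself) and `r * (n - r)` taking one.
-/

open Finset

namespace Finset

variable {α : Type*} [DecidableEq α]

theorem card_filter_powersetCard_union_card_inter_eq {s t : Finset α} (hst : Disjoint s t)
    {k j : ℕ} (hjk : j ≤ k) :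
    #{B ∈ (s ∪ t).powersetCard k | #(B ∩ t) = j} = (#s).choose (k - j) * (#t).choose j := by
  rw [← card_powersetCard, ← card_powersetCard, ← card_product]
  refine card_nbij' (fun B => (B \ t, B ∩ t)) (fun p => p.1 ∪ p.2) ?_ ?_ ?_ ?_
  · intro B hB
    simp only [coe_filter, mem_powersetCard, Set.mem_ofPred_eq] at hB
    obtain ⟨⟨hBst, hBk⟩, hBt⟩ := hB
    simp only [coe_product, Set.mem_prod, mem_coe, mem_powersetCard]
    refine ⟨⟨?_, ?_⟩, inter_subset_right, hBt⟩
    · exact sdiff_le_iff'.2 hBst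
    · rw [card_sdiff, inter_comm, hBt, hBk]
  · rintro ⟨X, Y⟩ hXY
    simp only [coe_product, Set.mem_prod, mem_coe, mem_powersetCard] at hXY
    obtain ⟨⟨hXs, hXk⟩, hYt, hYj⟩ := hXY
    have hXt : X ∩ t = ∅ := disjoint_iff_inter_eq_empty.1 (hst.mono_left hXs)
    simp only [coe_filter, mem_powersetCard, Set.mem_ofPred_eq]
    refine ⟨⟨union_subset_union hXs hYt, ?_⟩, ?_⟩
    · rw [card_union_of_disjoint (hst.mono hXs hYt)]
      omega
    · rwa [union_inter_distrib_right, hXt, empty_union, inter_eq_left.2 hYt]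
  · intro B _
    exact sdiff_union_inter B t
  · rintro ⟨X, Y⟩ hXY
    simp only [coe_product, Set.mem_prod, mem_coe, mem_powersetCard] at hXY
    obtain ⟨⟨hXs, -⟩, hYt, -⟩ := hXY
    simp only [union_sdiff_distrib, sdiff_eq_self_of_disjoint (hst.mono_left hXs),
      sdiff_eq_empty_iff_subset.2 hYt, union_empty, union_inter_distrib_right,
      disjoint_iff_inter_eq_empty.1 (hst.mono_left hXs), empty_union, inter_eq_left.2 hYt]

theorem card_filter_powersetCard_union_card_inter_le_one {s t : Finset α} (hst : Disjoint s t)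
    {k : ℕ} (hk : 0 < k) :
    #{B ∈ (s ∪ t).powersetCard k | #(B ∩ t) ≤ 1} = (#s).choose k + (#s).choose (k - 1) * #t := by
  simp only [Nat.le_one_iff_eq_zero_or_eq_one, filter_or]
  rw [card_union_of_disjoint (disjoint_filter.2 fun _ _ h => by omega),
    card_filter_powersetCard_union_card_inter_eq hst (Nat.zero_le k),
    card_filter_powersetCard_union_card_inter_eq hst hk]
  simp

end Finset

/-- For `0 < r < n`, the minimal matroid `T_{r,n}` has exactly `r(n-r) + 1` bases.
Its bases are the `r`-element subsets `B` of `{1, …, n}` containing at most one element of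
`{r+1, …, n}` (equivalently, the sets `{b_1 < … < b_r}` with `b_j ≤ j + 1` for `j < r`). -/
theorem minimal_matroid_card_bases (n r : ℕ) (hr : 0 < r) (hrn : r < n) :
    ((Finset.Icc 1 n).powersetCard r |>.filter
        (fun B => (B ∩ Finset.Ioc r n).card ≤ 1)).card = r * (n - r) + 1 := by
  have hdisj : Disjoint (Icc 1 r) (Ioc r n) := disjoint_left.2 fun _ h₁ h₂ => by
    simp only [mem_Icc, mem_Ioc] at h₁ h₂
    omega
  have hunion : Icc 1 r ∪ Ioc r n = Icc 1 n := by
    ext b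
    simp only [mem_union, mem_Icc, mem_Ioc]
    omega
  rw [← hunion, card_filter_powersetCard_union_card_inter_le_one hdisj hr, Nat.card_Icc,
    Nat.card_Ioc, Nat.add_sub_cancel, Nat.choose_self, Nat.choose_symm hr, Nat.choose_one_right]
  ring
end

section
/- For 0 < r < n, the minimal matroid T_{r,n} is a connected matroid. -/
/-!
Each set `{1,…,r} ∪ {z}` with `r < z ≤ n` is a circuit of `T_{r,n}`: it properly contains the
base `{1,…,r}`, and deleting any of its elements leaves a base. Hence every element of
`{1,…,n}` lies on a common circuit with `1`. A circuit cannot meet both parts of a direct sum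
decomposition, so `1` would have to lie in both parts.
-/

open Matroid

namespace IsDirectSumDecomp

variable {M : Matroid ℕ} {A B C : Set ℕ} {a : ℕ}

lemma symm (h : IsDirectSumDecomp M A B) : IsDirectSumDecomp M B A := by
  obtain ⟨hA, hB, hdisj, hunion, hindep⟩ := h
  exact ⟨hB, hA, hdisj.symm, Set.union_comm A B ▸ hunion,
    fun I hI ↦ (hindep I hI).trans and_comm⟩

/-- If `C` met both parts, `C ∩ A` and `C ∩ B` would be proper subsets of `C`, hence
independent, and so would `C` be. -/
lemma isCircuit_subset_of_mem (h : IsDirectSumDecomp M A B) (hC : M.IsCircuit C)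
    (haC : a ∈ C) (haA : a ∈ A) : C ⊆ A := by
  by_contra hCA
  have hCB : C ∩ B ⊂ C :=
    Set.inter_subset_left.ssubset_of_not_subset fun hsub ↦
      Set.disjoint_left.1 h.2.2.1 haA (Set.inter_subset_right (hsub haC))
  have hCA' : C ∩ A ⊂ C :=
    Set.inter_subset_left.ssubset_of_not_subset fun hsub ↦
      hCA (hsub.trans Set.inter_subset_right)
  exact hC.not_indep <|
    (h.2.2.2.2 C hC.subset_ground).2 ⟨hC.ssubset_indep hCA', hC.ssubset_indep hCB⟩

end IsDirectSumDecomp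

lemma not_isDirectSumDecomp_of_forall_isCircuit {M : Matroid ℕ} (x : ℕ)
    (hx : ∀ e ∈ M.E, ∃ C, M.IsCircuit C ∧ x ∈ C ∧ e ∈ C) (A B : Set ℕ) :
    ¬ IsDirectSumDecomp M A B := by
  intro h
  have mem_left {A B : Set ℕ} (h : IsDirectSumDecomp M A B) : x ∈ A := by
    obtain ⟨a, haA⟩ := h.1
    obtain ⟨C, hC, hxC, haC⟩ := hx a (h.2.2.2.1 ▸ Or.inl haA)
    exact h.isCircuit_subset_of_mem hC haC haA hxC
  exact Set.disjoint_left.1 h.2.2.1 (mem_left h) (mem_left h.symm)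

lemma Matroid.IsBase.isCircuit_insert {α : Type*} {M : Matroid α} {B : Set α} {z : α}
    (hB : M.IsBase B) (hzB : z ∉ B) (hz : z ∈ M.E)
    (hexchange : ∀ e ∈ B, M.Indep (insert z (B \ {e}))) : M.IsCircuit (insert z B) := by
  refine isCircuit_iff_dep_forall_sdiff_singleton_indep.2 ⟨hB.dep_of_insert hzB, ?_⟩
  rintro e (rfl | heB)
  · rw [Set.insert_sdiff_self_of_notMem hzB]
    exact hB.indep
  · rw [← Set.insert_sdiff_singleton_comm (ne_of_mem_of_not_mem heB hzB).symm]
    exact hexchange e heB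

lemma encard_Icc_one_s10 (m : ℕ) : (Set.Icc 1 m).encard = m := by
  rw [← Finset.coe_Icc, Set.encard_coe_eq_coe_finsetCard, Nat.card_Icc, Nat.add_sub_cancel]

/-- `M` is `T_{r,n}`, described by its bases. -/
def IsMinimalMatroid_s10 (n r : ℕ) (M : Matroid ℕ) : Prop :=
  ∀ B : Set ℕ, M.IsBase B ↔ B ⊆ Set.Icc 1 n ∧ B.encard = r ∧ (B ∩ Set.Ioc r n).encard ≤ 1

namespace IsMinimalMatroid_s10

variable {n r z : ℕ} {M : Matroid ℕ}

lemma isBase_Icc_one (hM : IsMinimalMatroid_s10 n r M) (hrn : r ≤ n) :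
    M.IsBase (Set.Icc 1 r) := by
  refine (hM _).2 ⟨Set.Icc_subset_Icc_right hrn, encard_Icc_one_s10 r, ?_⟩
  have hdisj : Set.Icc 1 r ∩ Set.Ioc r n = ∅ :=
    Set.eq_empty_of_forall_notMem fun _ hx ↦ hx.2.1.not_ge hx.1.2
  rw [hdisj, Set.encard_empty]
  exact zero_le_one

lemma isBase_insert_Icc_one_diff (hM : IsMinimalMatroid_s10 n r M) (hz : z ∈ Set.Ioc r n)
    {e : ℕ} (he : e ∈ Set.Icc 1 r) : M.IsBase (insert z (Set.Icc 1 r \ {e})) := by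
  have hzIcc : z ∉ Set.Icc 1 r \ {e} := fun h ↦ hz.1.not_ge h.1.2
  refine (hM _).2 ⟨?_, ?_, ?_⟩
  · exact Set.insert_subset ⟨Nat.one_le_of_lt hz.1, hz.2⟩
      (Set.sdiff_subset.trans (Set.Icc_subset_Icc_right (hz.1.le.trans hz.2)))
  · rw [Set.encard_insert_of_notMem hzIcc, Set.encard_sdiff_singleton_add_one he, encard_Icc_one_s10]
  · refine (Set.encard_le_encard ?_).trans (Set.encard_singleton z).le
    rintro x ⟨rfl | hx, hxz⟩
    · rfl
    · exact absurd hx.1.2 hxz.1.not_ge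

lemma isCircuit_insert_Icc_one (hM : IsMinimalMatroid_s10 n r M) (hE : M.E = Set.Icc 1 n)
    (hz : z ∈ Set.Ioc r n) : M.IsCircuit (insert z (Set.Icc 1 r)) :=
  (hM.isBase_Icc_one (hz.1.le.trans hz.2)).isCircuit_insert (fun h ↦ hz.1.not_ge h.2)
    (hE ▸ ⟨Nat.one_le_of_lt hz.1, hz.2⟩)
    fun _ he ↦ (hM.isBase_insert_Icc_one_diff hz he).indep

end IsMinimalMatroid_s10

/-- For `0 < r < n`, the minimal matroid `T_{r,n}` (the rank-`r` matroid on `{1,…,n}` whose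
bases are the `r`-subsets with at most one element in `{r+1,…,n}`, i.e. `U_{r,r+1}` with
`n-r-1` parallel elements added) is connected: it is not a direct sum of two matroids on
nonempty ground sets. -/
theorem minimal_matroid_connected (n r : ℕ) (hr : 0 < r) (hrn : r < n)
    (M : Matroid ℕ) (hE : M.E = Set.Icc 1 n)
    (hbase : ∀ B : Set ℕ, M.IsBase B ↔
      B ⊆ Set.Icc 1 n ∧ B.encard = r ∧ (B ∩ Set.Ioc r n).encard ≤ 1) :
    ¬ ∃ A B, IsDirectSumDecomp M A B := by
  rintro ⟨A, B, h⟩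
  have hM : IsMinimalMatroid_s10 n r M := hbase
  have h1 : 1 ∈ Set.Icc 1 r := ⟨le_rfl, hr⟩
  refine not_isDirectSumDecomp_of_forall_isCircuit 1 (fun e he ↦ ?_) A B h
  rw [hE] at he
  by_cases her : e ≤ r
  · exact ⟨_, hM.isCircuit_insert_Icc_one hE ⟨hrn, le_rfl⟩, Or.inr h1, Or.inr ⟨he.1, her⟩⟩
  · exact ⟨_, hM.isCircuit_insert_Icc_one hE ⟨not_le.1 her, he.2⟩, Or.inr h1, Or.inl rfl⟩
end

section
/- Let f be a valuative matroid invariant on rank-r matroids on {1,...,n} that is additive (f(M) = 0 whenever M is disconnected). If M is a sparse paving matroid whose polytope appears in a matroid subdivision of the hypersimplex P(U_{r,n}) together with k facets that are polytopes of matroids isomorphic to T_{r,n}, then f(M) = f(U_{r,n}) - k·f(T_{r,n}). -/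
open Matroid

def basePolytope (M : Matroid ℕ) : Set (ℕ → ℝ) :=
  convexHull ℝ {x | ∃ B : Set ℕ, M.IsBase B ∧ x = B.indicator 1}

def IsCircuitE (M : Matroid ℕ) (C : Set ℕ) : Prop := Minimal M.Dep C

/-!
Feed the intersections of the pieces into valuativity. Every term indexed by two or more pieces
vanishes by additivity: if the matroid `N` with `P(N) = P_i ∩ P_j` were connected, then for any two
ground elements `a, b` the direction `e_a - e_b` would lie in the linear span of `P(N) - P(N)`
(two elements of a circuit can be traded between two bases), so `P(N)` would be full-dimensional
in the hypersimplex. A face of `P_i` containing a full-dimensional polytope is `P_i` itself, so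
`P_i = P_i ∩ P_j = P_j`, which is impossible. What remains is `f(U) - ∑ᵢ f(Pᵢ) = 0`, and every
piece other than `M` is isomorphic to `T`.
-/

open Set

section Convex

variable {E : Type*} [AddCommGroup E] [Module ℝ E]

theorem Convex.exists_forall_abs_le_add_smul_mem_of_mem_span {C S : Set E} {x : E}
    (hC : Convex ℝ C) (hx : x ∈ C) (hS : ∀ d ∈ S, ∃ ε > 0, ∀ t : ℝ, |t| ≤ ε → x + t • d ∈ C)
    {d : E} (hd : d ∈ Submodule.span ℝ S) :
    ∃ ε > 0, ∀ t : ℝ, |t| ≤ ε → x + t • d ∈ C := by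
  induction hd using Submodule.span_induction with
  | mem d hd => exact hS d hd
  | zero => exact ⟨1, one_pos, fun t _ => by simpa using hx⟩
  | add d₁ d₂ _ _ ih₁ ih₂ =>
    obtain ⟨ε₁, hε₁, H₁⟩ := ih₁
    obtain ⟨ε₂, hε₂, H₂⟩ := ih₂
    refine ⟨min ε₁ ε₂ / 2, by positivity, fun t ht => ?_⟩
    have h2t : |2 * t| ≤ min ε₁ ε₂ := by rw [abs_mul, abs_two]; linarith
    have := hC (H₁ _ (h2t.trans (min_le_left _ _))) (H₂ _ (h2t.trans (min_le_right _ _)))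
      (by norm_num : (0 : ℝ) ≤ 1 / 2) (by norm_num : (0 : ℝ) ≤ 1 / 2) (by norm_num)
    convert this using 1
    module
  | smul c d _ ih =>
    obtain ⟨ε, hε, H⟩ := ih
    refine ⟨ε / (|c| + 1), by positivity, fun t ht => ?_⟩
    have htc : |t * c| ≤ ε := by
      rw [abs_mul]
      calc |t| * |c| ≤ ε / (|c| + 1) * (|c| + 1) := by gcongr; linarith
        _ = ε := by field_simp
    simpa [mul_smul] using H _ htc

/-- The centroid of a finite set lies in the relative interior of its convex hull. -/
theorem Set.Finite.exists_mem_convexHull_forall_add_smul_mem {V : Set E} (hV : V.Finite)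
    (hVne : V.Nonempty) :
    ∃ x ∈ convexHull ℝ V, ∀ d ∈ vectorSpan ℝ V, ∃ ε > (0 : ℝ), x + ε • d ∈ convexHull ℝ V := by
  classical
  obtain ⟨s, rfl⟩ := hV.exists_finset_coe
  have hs : (0 : ℝ) < s.card := by exact_mod_cast Finset.card_pos.mpr (by simpa using hVne)
  set x : E := (s.card : ℝ)⁻¹ • ∑ v ∈ s, v
  have hgen : ∀ d ∈ (s : Set E) -ᵥ (s : Set E), ∃ ε > 0, ∀ t : ℝ, |t| ≤ ε →
      x + t • d ∈ convexHull ℝ (s : Set E) := by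
    rintro _ ⟨v, hv, w, hw, rfl⟩
    rw [Finset.mem_coe] at hv hw
    refine ⟨(s.card : ℝ)⁻¹, by positivity, fun t ht => ?_⟩
    set δ : E → ℝ := fun u => (if u = v then 1 else 0) - if u = w then 1 else 0
    have hδ : ∀ u, |t * δ u| ≤ (s.card : ℝ)⁻¹ := fun u => by
      rw [abs_mul]
      refine (mul_le_of_le_one_right (abs_nonneg t) ?_).trans ht
      simp only [δ]; split_ifs <;> norm_num
    have hδsum : ∑ u ∈ s, δ u • u = v - w := by
      simp [δ, sub_smul, ite_smul, Finset.sum_sub_distrib, hv, hw]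
    have hx : x + t • (v -ᵥ w) = ∑ u ∈ s, ((s.card : ℝ)⁻¹ + t * δ u) • u := by
      rw [vsub_eq_sub, ← hδsum]
      simp only [x, add_smul, mul_smul, Finset.sum_add_distrib, Finset.smul_sum]
    rw [hx]
    refine (convex_convexHull ℝ _).sum_mem (fun u _ => ?_) ?_
      (fun u hu => subset_convexHull ℝ _ hu)
    · linarith [neg_abs_le (t * δ u), hδ u]
    · simp [δ, Finset.sum_add_distrib, ← Finset.mul_sum, Finset.sum_sub_distrib, hv, hw, hs.ne']
  have hxmem : x ∈ convexHull ℝ (s : Set E) := by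
    simp only [x, Finset.smul_sum]
    exact (convex_convexHull ℝ _).sum_mem (fun _ _ => by positivity) (by simp [hs.ne'])
      (fun u hu => subset_convexHull ℝ _ hu)
  refine ⟨x, hxmem, fun d hd => ?_⟩
  obtain ⟨ε, hε, H⟩ := (convex_convexHull ℝ _).exists_forall_abs_le_add_smul_mem_of_mem_span
    hxmem hgen (by rwa [vectorSpan_def] at hd)
  exact ⟨ε, hε, H ε (abs_of_pos hε).le⟩

theorem IsExtreme.subset_of_convexHull_subset {R F V : Set E} (hF : IsExtreme ℝ R F)
    (hV : V.Finite) (hVne : V.Nonempty) (hVF : convexHull ℝ V ⊆ F)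
    (hR : affineSpan ℝ R ≤ affineSpan ℝ V) : R ⊆ F := by
  obtain ⟨x, hx, hint⟩ := hV.exists_mem_convexHull_forall_add_smul_mem hVne
  intro y hy
  have hxy : x - y ∈ vectorSpan ℝ V := by
    rw [← direction_affineSpan]
    exact AffineSubspace.vsub_mem_direction (convexHull_subset_affineSpan V hx)
      (hR (subset_affineSpan ℝ R hy))
  obtain ⟨ε, hε, hz⟩ := hint _ hxy
  refine hF.left_mem_of_mem_openSegment hy (hF.subset (hVF hz)) (hVF hx)
    ⟨ε / (1 + ε), 1 / (1 + ε), by positivity, by positivity, by field_simp; ring, ?_⟩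
  match_scalars <;> field_simp
  ring

end Convex

section Indicator

variable {α : Type*}

theorem Set.indicator_insert_sdiff_singleton_sub {B : Set α} {c d : α} (hd : d ∈ B) (hc : c ∉ B) :
    (insert c B \ {d}).indicator (1 : α → ℝ) - B.indicator 1 =
      ({c} : Set α).indicator 1 - ({d} : Set α).indicator 1 := by
  classical
  funext j
  simp only [Pi.sub_apply, Set.indicator_apply, mem_sdiff, mem_insert_iff, mem_singleton_iff,
    Pi.one_apply]
  split_ifs <;> grind

theorem Finset.indicator_coe_eq_sum_indicator_singleton (s : Finset α) :
    (s : Set α).indicator (1 : α → ℝ) = ∑ a ∈ s, ({a} : Set α).indicator 1 := by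
  classical
  funext j
  simp [indicator_apply, Finset.sum_apply]

theorem indicator_sub_mem_of_forall_singleton_sub_mem (W : Submodule ℝ (α → ℝ)) {S X Y : Set α}
    (hS : ∀ a ∈ S, ∀ b ∈ S, ({a} : Set α).indicator 1 - ({b} : Set α).indicator 1 ∈ W)
    (hXS : X ⊆ S) (hYS : Y ⊆ S) (hX : X.Finite) (hY : Y.Finite) (hXY : X.ncard = Y.ncard) :
    X.indicator 1 - Y.indicator 1 ∈ W := by
  classical
  obtain ⟨s, rfl⟩ := hX.exists_finset_coe
  obtain ⟨t, rfl⟩ := hY.exists_finset_coe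
  rw [ncard_coe_finset, ncard_coe_finset] at hXY
  obtain rfl | ⟨c, hc⟩ := S.eq_empty_or_nonempty
  · simp [subset_empty_iff.mp hXS, subset_empty_iff.mp hYS]
  have hsum : (s : Set α).indicator 1 - (t : Set α).indicator 1 =
      ∑ a ∈ s, (({a} : Set α).indicator 1 - ({c} : Set α).indicator (1 : α → ℝ)) -
        ∑ b ∈ t, (({b} : Set α).indicator 1 - ({c} : Set α).indicator 1) := by
    simp only [Finset.sum_sub_distrib, Finset.sum_const, hXY,
      Finset.indicator_coe_eq_sum_indicator_singleton]
    abel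
  rw [hsum]
  exact W.sub_mem (W.sum_mem fun a ha => hS a (hXS ha) c hc)
    (W.sum_mem fun b hb => hS b (hYS hb) c hc)

theorem Finset.sum_indicator_one_eq_ncard {s : Finset α} {B : Set α}
    (hB : B ⊆ s) : ∑ j ∈ s, B.indicator (1 : α → ℝ) j = B.ncard := by
  obtain ⟨t, rfl⟩ := (s.finite_toSet.subset hB).exists_finset_coe
  rw [Finset.sum_indicator_subset _ (Finset.coe_subset.mp hB), ncard_coe_finset]
  simp

end Indicator

namespace Matroid

variable {α : Type*} {N U : Matroid α}

def baseVertices (N : Matroid α) : Set (α → ℝ) := {x | ∃ B, N.IsBase B ∧ x = B.indicator 1}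

theorem baseVertices_finite [N.Finite] : N.baseVertices.Finite := by
  have hbases : {B | N.IsBase B}.Finite :=
    N.ground_finite.finite_subsets.subset fun _ hB => hB.subset_ground
  exact (hbases.image fun B => B.indicator 1).subset fun _ ⟨B, hB, hx⟩ => ⟨B, hB, hx.symm⟩

theorem baseVertices_nonempty : N.baseVertices.Nonempty :=
  let ⟨B, hB⟩ := N.exists_isBase
  ⟨_, B, hB, rfl⟩

theorem IsCircuit.indicator_singleton_sub_mem_vectorSpan {C : Set α} (hC : N.IsCircuit C)
    {c d : α} (hc : c ∈ C) (hd : d ∈ C) :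
    ({c} : Set α).indicator 1 - ({d} : Set α).indicator 1 ∈ vectorSpan ℝ N.baseVertices := by
  obtain rfl | hcd := eq_or_ne c d
  · simp
  obtain ⟨B, hB, hCB⟩ := (hC.sdiff_singleton_indep hc).exists_isBase_superset
  have hCcB : C ⊆ insert c B := fun x hx => by
    obtain rfl | hxc := eq_or_ne x c
    exacts [mem_insert x B, subset_insert c B (hCB ⟨hx, hxc⟩)]
  have hcB : c ∉ B := fun hcB =>
    hC.not_indep (hB.indep.subset (hCcB.trans (insert_subset hcB subset_rfl)))
  have hdB : d ∈ B := hCB ⟨hd, hcd.symm⟩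
  -- `C` is the fundamental circuit of `c` in `B`, so trading `d` for `c` keeps `B` a base
  have hind : N.Indep (insert c B \ {d}) := by
    rw [← hB.indep.mem_fundCircuit_iff (by rw [hB.closure_eq]; exact hC.subset_ground hc) hcB,
      ← hC.eq_fundCircuit_of_subset hB.indep hCcB]
    exact hd
  have hB' := hB.exchange_isBase_of_indep' hdB hcB hind
  simpa [indicator_insert_sdiff_singleton_sub hdB hcB] using
    vsub_mem_vectorSpan ℝ (s := N.baseVertices) ⟨_, hB', rfl⟩ ⟨_, hB, rfl⟩

end Matroid

theorem basePolytope_eq_convexHull_baseVertices (N : Matroid ℕ) :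
    basePolytope N = convexHull ℝ N.baseVertices := rfl

theorem exists_isDirectSumDecomp_of_indicator_singleton_sub_notMem {N : Matroid ℕ} {a b : ℕ}
    (ha : a ∈ N.E) (hb : b ∈ N.E)
    (hab : ({a} : Set ℕ).indicator 1 - ({b} : Set ℕ).indicator 1 ∉ vectorSpan ℝ N.baseVertices) :
    ∃ A B, IsDirectSumDecomp N A B := by
  set W := vectorSpan ℝ N.baseVertices
  set A := {c ∈ N.E | ({a} : Set ℕ).indicator 1 - ({c} : Set ℕ).indicator 1 ∈ W}
  have hcirc : ∀ C, N.IsCircuit C → C ⊆ A ∨ C ⊆ N.E \ A := by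
    refine fun C hC => or_iff_not_imp_left.mpr fun hCA c hc => ⟨hC.subset_ground hc, fun hcA => ?_⟩
    obtain ⟨d, hd, hdA⟩ := not_subset.mp hCA
    exact hdA ⟨hC.subset_ground hd, by
      simpa using W.add_mem hcA.2 (hC.indicator_singleton_sub_mem_vectorSpan hc hd)⟩
  refine ⟨A, N.E \ A, ⟨a, ha, by simp⟩, ⟨b, hb, fun h => hab h.2⟩, disjoint_sdiff_right,
    union_sdiff_cancel (sep_subset _ _), fun I hI => ⟨fun h => ⟨h.subset inter_subset_left,
    h.subset inter_subset_left⟩, fun ⟨hIA, hIB⟩ => by_contra fun hI' => ?_⟩⟩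
  obtain ⟨C, hCI, hC⟩ := ((N.not_indep_iff hI).mp hI').exists_isCircuit_subset
  rcases hcirc C hC with h | h
  exacts [hC.not_indep (hIA.subset (subset_inter hCI h)),
    hC.not_indep (hIB.subset (subset_inter hCI h))]

theorem Matroid.IsBase.ncard_eq_of_basePolytope_subset {N U : Matroid ℕ} [N.Finite] {r : ℕ}
    (hU : ∀ B, U.IsBase B → B ⊆ N.E ∧ B.ncard = r) (hNU : basePolytope N ⊆ basePolytope U)
    {B : Set ℕ} (hB : N.IsBase B) : B.ncard = r := by
  set s := N.ground_finite.toFinset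
  have hsum : ∀ X ⊆ N.E, ∑ j ∈ s, X.indicator (1 : ℕ → ℝ) j = X.ncard := fun X hX =>
    Finset.sum_indicator_one_eq_ncard (by simpa [s] using hX)
  have hlin : IsLinearMap ℝ fun x : ℕ → ℝ => ∑ j ∈ s, x j :=
    ⟨fun x y => by simp [Finset.sum_add_distrib], fun c x => by simp [Finset.mul_sum]⟩
  have hUr : basePolytope U ⊆ {x | ∑ j ∈ s, x j = r} := by
    refine convexHull_min ?_ (convex_hyperplane hlin _)
    rintro _ ⟨B', hB', rfl⟩
    simp [hsum B' (hU B' hB').1, (hU B' hB').2]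
  have := hUr (hNU (subset_convexHull ℝ _ ⟨B, hB, rfl⟩))
  rw [mem_ofPred_eq, hsum B hB.subset_ground] at this
  exact_mod_cast this

theorem affineSpan_basePolytope_eq_of_not_isDirectSumDecomp {N U : Matroid ℕ} [N.Finite] {r : ℕ}
    (hno : ¬∃ A B, IsDirectSumDecomp N A B) (hU : ∀ B, U.IsBase B → B ⊆ N.E ∧ B.ncard = r)
    (hNU : basePolytope N ⊆ basePolytope U) :
    affineSpan ℝ (basePolytope N) = affineSpan ℝ (basePolytope U) := by
  refine le_antisymm (affineSpan_mono ℝ hNU) ?_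
  have hconn : ∀ a ∈ N.E, ∀ b ∈ N.E,
      ({a} : Set ℕ).indicator 1 - ({b} : Set ℕ).indicator 1 ∈ vectorSpan ℝ N.baseVertices :=
    fun a ha b hb => by_contra fun h =>
      hno (exists_isDirectSumDecomp_of_indicator_singleton_sub_notMem ha hb h)
  obtain ⟨B₀, hB₀⟩ := N.exists_isBase
  rw [basePolytope_eq_convexHull_baseVertices, basePolytope_eq_convexHull_baseVertices,
    affineSpan_convexHull, affineSpan_convexHull, affineSpan_le]
  rintro _ ⟨B, hB, rfl⟩
  have hd := indicator_sub_mem_of_forall_singleton_sub_mem _ hconn (hU B hB).1 hB₀.subset_ground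
    (N.ground_finite.subset (hU B hB).1) (N.ground_finite.subset hB₀.subset_ground)
    ((hU B hB).2.trans (hB₀.ncard_eq_of_basePolytope_subset hU hNU).symm)
  have hB₀span : B₀.indicator 1 ∈ affineSpan ℝ N.baseVertices :=
    mem_affineSpan ℝ ⟨B₀, hB₀, rfl⟩
  have := AffineSubspace.vadd_mem_of_mem_direction (by rwa [direction_affineSpan]) hB₀span
  rwa [vadd_eq_add, sub_add_cancel] at this

theorem eq_of_basePolytope_subset_inter {N U : Matroid ℕ} [N.Finite] {r : ℕ}
    {P Q : Set (ℕ → ℝ)} (hno : ¬∃ A B, IsDirectSumDecomp N A B)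
    (hU : ∀ B, U.IsBase B → B ⊆ N.E ∧ B.ncard = r) (hNU : basePolytope N ⊆ basePolytope U)
    (hNPQ : basePolytope N ⊆ P ∩ Q)
    (hP : affineSpan ℝ P = affineSpan ℝ (basePolytope U))
    (hQ : affineSpan ℝ Q = affineSpan ℝ (basePolytope U))
    (hPext : IsExtreme ℝ P (P ∩ Q)) (hQext : IsExtreme ℝ Q (P ∩ Q)) : P = Q := by
  have hspan := affineSpan_basePolytope_eq_of_not_isDirectSumDecomp hno hU hNU
  have hface : ∀ R, IsExtreme ℝ R (P ∩ Q) → affineSpan ℝ R = affineSpan ℝ (basePolytope U) →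
      R ⊆ P ∩ Q := fun R hR hRU =>
    hR.subset_of_convexHull_subset N.baseVertices_finite N.baseVertices_nonempty hNPQ
      (by rw [hRU, ← hspan, basePolytope_eq_convexHull_baseVertices, affineSpan_convexHull])
  exact ((hface P hPext hP).trans inter_subset_right).antisymm
    ((hface Q hQext hQ).trans inter_subset_left)

theorem Finset.sum_neg_one_pow_card_mul_eq_of_nontrivial {ι R : Type*} [Fintype ι]
    [DecidableEq ι] [CommRing R] (h : Finset ι → R)
    (hvanish : ∀ J : Finset ι, J.Nontrivial → h J = 0) :
    ∑ J, (-1) ^ J.card * h J = h ∅ - ∑ i, h {i} := by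
  have hsub : insert (∅ : Finset ι) (univ.map ⟨singleton, singleton_injective⟩) ⊆
      (univ : Finset (Finset ι)) := subset_univ _
  rw [← sum_subset hsub fun J _ hJ => ?_, sum_insert (by simp), sum_map]
  · simp [sub_eq_add_neg]
  · simp only [mem_insert, mem_map, mem_univ, true_and, not_or, not_exists] at hJ
    obtain ⟨i, rfl⟩ | hJ' := (nonempty_iff_ne_empty.mpr hJ.1).exists_eq_singleton_or_nontrivial
    · exact absurd rfl (hJ.2 i)
    · rw [hvanish J hJ', mul_zero]

theorem exists_intersection_family {ι : Type*} [LinearOrder ι] {S : Set ℕ}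
    (U : Matroid ℕ) (pieces : ι → Matroid ℕ)
    (hinter : ∀ J : Finset ι, J.Nonempty → ∃ N : Matroid ℕ,
      N.E = S ∧ basePolytope N = ⋂ j ∈ J, basePolytope (pieces j)) :
    ∃ g : Finset ι → Matroid ℕ, g ∅ = U ∧ (∀ i, g {i} = pieces i) ∧
      (∀ J, J.Nonempty → basePolytope (g J) = ⋂ j ∈ J, basePolytope (pieces j)) ∧
      ∀ J : Finset ι, J.Nontrivial → (g J).E = S := by
  classical
  choose N hNE hN using hinter
  refine ⟨fun J => if hJ : J.Nontrivial then N J hJ.nonempty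
    else if hJ : J.Nonempty then pieces (J.min' hJ) else U, by simp, fun i => by simp,
    fun J hJ => ?_, fun J hJ => by simp [hJ, hNE]⟩
  obtain ⟨i, rfl⟩ | hJ' := hJ.exists_eq_singleton_or_nontrivial
  · simp
  · simp [hJ', hN]

theorem sparse_paving_subdivision_formula_general (n r k : ℕ)
    (f : Matroid ℕ → ℤ) (U T M : Matroid ℕ)
    (hUbase : ∀ B : Set ℕ, U.IsBase B ↔ B ⊆ Set.Icc 1 n ∧ B.encard = r)
    (pieces : Fin (k + 1) → Matroid ℕ)
    (hpiece0 : pieces 0 = M)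
    (hpieceT : ∀ i : Fin (k + 1), i ≠ 0 → ∃ σ : Equiv.Perm ℕ, pieces i = T.mapEquiv σ)
    (hcover : basePolytope U = ⋃ i, basePolytope (pieces i))
    (hfacet : ∀ i, affineSpan ℝ (basePolytope (pieces i)) = affineSpan ℝ (basePolytope U))
    (hcomplex : ∀ i j, i ≠ j → basePolytope (pieces i) ≠ basePolytope (pieces j) ∧
      IsExtreme ℝ (basePolytope (pieces i)) (basePolytope (pieces i) ∩ basePolytope (pieces j)) ∧
      IsExtreme ℝ (basePolytope (pieces j)) (basePolytope (pieces i) ∩ basePolytope (pieces j)))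
    (hinter : ∀ J : Finset (Fin (k + 1)), J.Nonempty → ∃ N : Matroid ℕ,
      N.E = Set.Icc 1 n ∧ basePolytope N = ⋂ j ∈ J, basePolytope (pieces j))
    (hinvariant : ∀ (N : Matroid ℕ) (σ : Equiv.Perm ℕ), f (N.mapEquiv σ) = f N)
    (hadditive : ∀ N : Matroid ℕ, (∃ A B, IsDirectSumDecomp N A B) → f N = 0)
    (hvaluative : ∀ g : Finset (Fin (k + 1)) → Matroid ℕ, g ∅ = U →
      (∀ J : Finset (Fin (k + 1)), J.Nonempty →
        basePolytope (g J) = ⋂ j ∈ J, basePolytope (pieces j)) →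
      ∑ J : Finset (Fin (k + 1)), (-1 : ℤ) ^ J.card * f (g J) = 0) :
    f M = f U - k * f T := by
  obtain ⟨g, hg_empty, hg_single, hg_poly, hg_E⟩ :=
    exists_intersection_family U pieces hinter
  have hU : ∀ B, U.IsBase B → B ⊆ Set.Icc 1 n ∧ B.ncard = r := fun B hB =>
    ⟨((hUbase B).mp hB).1, by simp [ncard_def, ((hUbase B).mp hB).2]⟩
  have hvanish : ∀ J : Finset (Fin (k + 1)), J.Nontrivial → f (g J) = 0 := by
    intro J hJ
    obtain ⟨i, hi, j, hj, hij⟩ := id hJ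
    have : (g J).Finite := ⟨hg_E J hJ ▸ finite_Icc 1 n⟩
    refine hadditive _ (by_contra fun hno => (hcomplex i j hij).1 ?_)
    have hsub : basePolytope (g J) ⊆ basePolytope (pieces i) ∩ basePolytope (pieces j) := by
      rw [hg_poly J hJ.nonempty]
      exact subset_inter (biInter_subset_of_mem hi) (biInter_subset_of_mem hj)
    have hiU : basePolytope (pieces i) ⊆ basePolytope U :=
      hcover ▸ subset_iUnion (fun i => basePolytope (pieces i)) i
    exact eq_of_basePolytope_subset_inter hno (hg_E J hJ ▸ hU)
      (hsub.trans (inter_subset_left.trans hiU)) hsub (hfacet i) (hfacet j)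
      (hcomplex i j hij).2.1 (hcomplex i j hij).2.2
  have hT : ∀ i : Fin k, f (pieces i.succ) = f T := fun i => by
    obtain ⟨σ, hσ⟩ := hpieceT i.succ i.succ_ne_zero
    rw [hσ, hinvariant]
  have := hvaluative g hg_empty hg_poly
  rw [Finset.sum_neg_one_pow_card_mul_eq_of_nontrivial (fun J => f (g J)) hvanish,
    Fin.sum_univ_succ] at this
  simp only [hg_empty, hg_single, hpiece0, hT, Finset.sum_const, Finset.card_univ,
    Fintype.card_fin, nsmul_eq_mul] at this
  linarith

/-- Let `f` be a valuative, additive matroid invariant on rank-`r` matroids on `{1,…,n}`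
(`f` is isomorphism-invariant, vanishes on disconnected matroids, and satisfies the
inclusion–exclusion property `∑_{J} (-1)^{|J|} f(P_J) = 0` for matroid subdivisions).
If `M` is a sparse paving matroid (all circuits of `M` have size `r` or `r+1` and all
circuits of `M✶` have size `n-r` or `n-r+1`) whose polytope appears in a matroid
subdivision of the hypersimplex `P(U_{r,n})` together with `k` facets that are polytopes of
matroids isomorphic to the minimal matroid `T_{r,n}`, then `f(M) = f(U_{r,n}) - k·f(T_{r,n})`.

Here `U` is the uniform matroid `U_{r,n}` and `T` the minimal matroid `T_{r,n}`, both
specified by their bases; the subdivision has pieces `pieces 0 = M` and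
`pieces i ≅ T_{r,n}` for `i ≠ 0`. -/
theorem sparse_paving_subdivision_formula (n r k : ℕ) (hr : 0 < r) (hrn : r < n)
    (f : Matroid ℕ → ℤ) (U T M : Matroid ℕ)
    (hUE : U.E = Set.Icc 1 n)
    (hUbase : ∀ B : Set ℕ, U.IsBase B ↔ B ⊆ Set.Icc 1 n ∧ B.encard = r)
    (hTE : T.E = Set.Icc 1 n)
    (hTbase : ∀ B : Set ℕ, T.IsBase B ↔
      B ⊆ Set.Icc 1 n ∧ B.encard = r ∧ (B ∩ Set.Ioc r n).encard ≤ 1)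
    (hME : M.E = Set.Icc 1 n)
    (hMsparsepaving :
      (∀ C, IsCircuitE M C → C.encard = r ∨ C.encard = r + 1) ∧
      (∀ C, IsCircuitE M✶ C → C.encard = (n - r : ℕ) ∨ C.encard = (n - r : ℕ) + 1))
    (pieces : Fin (k + 1) → Matroid ℕ)
    (hpiece0 : pieces 0 = M)
    (hpieceE : ∀ i, (pieces i).E = Set.Icc 1 n)
    (hpieceT : ∀ i : Fin (k + 1), i ≠ 0 → ∃ σ : Equiv.Perm ℕ, pieces i = T.mapEquiv σ)
    (hcover : basePolytope U = ⋃ i, basePolytope (pieces i))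
    (hfacet : ∀ i, affineSpan ℝ (basePolytope (pieces i)) = affineSpan ℝ (basePolytope U))
    (hcomplex : ∀ i j, i ≠ j → basePolytope (pieces i) ≠ basePolytope (pieces j) ∧
      IsExtreme ℝ (basePolytope (pieces i)) (basePolytope (pieces i) ∩ basePolytope (pieces j)) ∧
      IsExtreme ℝ (basePolytope (pieces j)) (basePolytope (pieces i) ∩ basePolytope (pieces j)))
    (hinter : ∀ J : Finset (Fin (k + 1)), J.Nonempty → ∃ N : Matroid ℕ,
      N.E = Set.Icc 1 n ∧ basePolytope N = ⋂ j ∈ J, basePolytope (pieces j))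
    (hinvariant : ∀ (N : Matroid ℕ) (σ : Equiv.Perm ℕ), f (N.mapEquiv σ) = f N)
    (hadditive : ∀ N : Matroid ℕ, (∃ A B, IsDirectSumDecomp N A B) → f N = 0)
    (hvaluative : ∀ g : Finset (Fin (k + 1)) → Matroid ℕ, g ∅ = U →
      (∀ J : Finset (Fin (k + 1)), J.Nonempty →
        basePolytope (g J) = ⋂ j ∈ J, basePolytope (pieces j)) →
      ∑ J : Finset (Fin (k + 1)), (-1 : ℤ) ^ J.card * f (g J) = 0) :
    f M = f U - k * f T :=
  sparse_paving_subdivision_formula_general n r k f U T M hUbase pieces hpiece0 hpieceT hcover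
    hfacet hcomplex hinter hinvariant hadditive hvaluative
end

section
/- The dimension of the matroid base polytope of a matroid M on n elements equals n - κ(M), where κ(M) is the number of connected components of M. -/
open Matroid

/-- The number of connected components of `M`: the number of equivalence classes of the
ground set under the equivalence relation generated by "lying in a common circuit"
(loops and coloops give singleton classes). -/
noncomputable def numComponents (M : Matroid ℕ) : ℕ :=
  Set.ncard {S : Set ℕ | ∃ a ∈ M.E,
    S = {b ∈ M.E |
      Relation.EqvGen (fun x y => ∃ C, IsCircuitE M C ∧ x ∈ C ∧ y ∈ C) a b}}

/-!
The direction of the affine span of the base polytope is spanned by differences `1_B - 1_B'` of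
base indicators. Any two bases are joined by single exchanges `B ↦ B - x + y`, each changing the
indicator by `e_x - e_y` where `x` lies in the fundamental circuit of `y`; conversely, for `x ≠ y`
in a circuit `C`, extending `C - y` to a base realises `e_x - e_y` by such an exchange. So the
direction is the span of `e_x - e_y` over pairs sharing a circuit, or equivalently over pairs in
the same component. Fixing a representative of each component, the vectors `e_x - e_{rep x}` over
the non-representatives `x` form a basis of it, and there are `|E| - κ(M)` of them.
-/

open Submodule

lemma Set.indicator_one_sub_indicator_one_insert_sdiff {α R : Type*} [DecidableEq α] [Ring R]
    {B : Set α} {x y : α} (hx : x ∈ B) (hy : y ∉ B) :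
    B.indicator (1 : α → R) - (insert y (B \ {x})).indicator 1 =
      Pi.single x 1 - Pi.single y 1 := by
  have hxy : x ≠ y := fun h => hy (h ▸ hx)
  ext z
  by_cases hzx : z = x <;> by_cases hzy : z = y <;> by_cases hzB : z ∈ B <;> simp_all

section SingleDiffSpan

variable {α : Type*} [DecidableEq α] (R : Type*) [Ring R]

def singleDiffSpan (r : α → α → Prop) : Submodule R (α → R) :=
  span R {v | ∃ x y, r x y ∧ v = Pi.single x 1 - Pi.single y 1}

variable {R} {r : α → α → Prop} {x y : α}

lemma single_sub_single_mem_singleDiffSpan (h : r x y) :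
    Pi.single x 1 - Pi.single y 1 ∈ singleDiffSpan R r :=
  subset_span ⟨x, y, h, rfl⟩

lemma singleDiffSpan_eqvGen (r : α → α → Prop) :
    singleDiffSpan R (Relation.EqvGen r) = singleDiffSpan R r := by
  refine le_antisymm (span_le.2 ?_) (span_mono ?_)
  · rintro _ ⟨x, y, h, rfl⟩
    induction h with
    | rel x y h => exact single_sub_single_mem_singleDiffSpan h
    | refl x => simp
    | symm x y _ ih => simpa using neg_mem ih
    | trans x y z _ _ ihxy ihyz => simpa using add_mem ihxy ihyz
  · rintro _ ⟨x, y, h, rfl⟩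
    exact ⟨x, y, .rel x y h, rfl⟩

/- Restricted to the coordinates of the non-representatives, the vectors `e_x - e_{rep x}` become
the standard unit vectors, hence are independent. (With infinitely many non-representatives both
sides are `0`.) -/
lemma finrank_singleDiffSpan_setoid [Nontrivial R] [StrongRankCondition R] (s : Setoid α) :
    Module.finrank R (singleDiffSpan R s) = {x | (Quotient.mk s x).out ≠ x}.ncard := by
  set N := {x | (Quotient.mk s x).out ≠ x}
  let v : N → α → R := fun x => Pi.single (x : α) 1 - Pi.single (Quotient.mk s x).out 1
  have hspan : span R (Set.range v) = singleDiffSpan R s := by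
    have hmem (x : α) :
        Pi.single x 1 - Pi.single (Quotient.mk s x).out 1 ∈ span R (Set.range v) := by
      by_cases hx : x ∈ N
      · exact subset_span ⟨⟨x, hx⟩, rfl⟩
      · simp [show (Quotient.mk s x).out = x from not_not.1 hx]
    refine le_antisymm (span_le.2 ?_) (span_le.2 ?_)
    · rintro _ ⟨x, rfl⟩
      exact single_sub_single_mem_singleDiffSpan (s.symm (Quotient.mk_out (x : α)))
    · rintro _ ⟨x, y, h, rfl⟩
      have hxy : Quotient.mk s x = Quotient.mk s y := Quotient.sound h
      simpa [hxy] using sub_mem (hmem x) (hmem y)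
  have hli : LinearIndependent R v := by
    refine .of_comp (LinearMap.funLeft R R (Subtype.val : N → α)) ?_
    convert Pi.linearIndependent_single_one N R with x
    ext y
    have hy : (Quotient.mk s x).out ≠ y := fun h => y.2 (by rw [← h, Quotient.out_eq])
    simp [v, Pi.single_apply, hy.symm, Subtype.ext_iff]
  have hcard := congrArg Cardinal.toNat (Cardinal.mk_range_eq_of_injective hli.injective)
  rw [Cardinal.toNat_lift, Cardinal.toNat_lift] at hcard
  rw [← hspan, Module.finrank, rank_span hli, hcard]
  rfl

end SingleDiffSpan

lemma Setoid.ncard_sep_out_ne_add_ncard_classes {α : Type*} (s : Setoid α) {E : Set α}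
    (hE : E.Finite) (hsat : ∀ ⦃a b⦄, s a b → a ∈ E → b ∈ E) :
    {x ∈ E | (Quotient.mk s x).out ≠ x}.ncard + {S | ∃ a ∈ E, S = {b ∈ E | s a b}}.ncard =
      E.ncard := by
  set cls : α → Set α := fun a => {b ∈ E | s a b}
  set reps := {x ∈ E | (Quotient.mk s x).out = x}
  have himage : {S | ∃ a ∈ E, S = cls a} = cls '' reps := by
    ext S
    constructor
    · rintro ⟨a, ha, rfl⟩
      have hout : s a (Quotient.mk s a).out := s.symm (Quotient.mk_out a)
      refine ⟨_, ⟨hsat hout ha, by rw [Quotient.out_eq]⟩, ?_⟩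
      ext b
      exact and_congr_right fun _ => ⟨s.trans hout, s.trans (s.symm hout)⟩
    · rintro ⟨a, ha, rfl⟩
      exact ⟨a, ha.1, rfl⟩
  have hinj : Set.InjOn cls reps := by
    intro a ha b hb hab
    have : s b a := (show a ∈ cls b from hab ▸ ⟨ha.1, s.refl a⟩).2
    rw [← ha.2, ← hb.2, Quotient.sound this]
  rw [himage, hinj.ncard_image, ← Set.ncard_inter_add_ncard_sdiff_eq_ncard E
    {x | (Quotient.mk s x).out ≠ x} hE]
  congr 2
  ext x
  simp [reps]

namespace Matroid

variable {α : Type*} {M : Matroid α} {B B' C : Set α} {x y : α}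

def SharesCircuit (M : Matroid α) (x y : α) : Prop := ∃ C, M.IsCircuit C ∧ x ∈ C ∧ y ∈ C

lemma eqvGen_sharesCircuit_eq_or_mem_ground (h : Relation.EqvGen M.SharesCircuit x y) :
    x = y ∨ x ∈ M.E ∧ y ∈ M.E := by
  induction h with
  | rel x y h =>
    obtain ⟨C, hC, hx, hy⟩ := h
    exact .inr ⟨hC.subset_ground hx, hC.subset_ground hy⟩
  | refl x => exact .inl rfl
  | symm x y _ ih => exact ih.imp Eq.symm And.symm
  | trans x y z _ _ ihxy ihyz =>
    rcases ihxy with rfl | ⟨hx, hy⟩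
    · exact ihyz
    · rcases ihyz with rfl | ⟨-, hz⟩
      exacts [.inr ⟨hx, hy⟩, .inr ⟨hx, hz⟩]

lemma IsCircuit.exists_isBase_exchange (hC : M.IsCircuit C) (hx : x ∈ C) (hy : y ∈ C)
    (hxy : x ≠ y) :
    ∃ B, M.IsBase B ∧ x ∈ B ∧ y ∉ B ∧ M.IsBase (insert y (B \ {x})) := by
  obtain ⟨B, hB, hCB⟩ := (hC.sdiff_singleton_indep hy).exists_isBase_superset
  have hCyB : C ⊆ insert y B := (Set.subset_insert_sdiff_singleton y C).trans
    (Set.insert_subset_insert hCB)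
  have hyB : y ∉ B := fun hyB => hC.not_indep (hB.indep.subset (by simpa [hyB] using hCyB))
  -- `C` is the only circuit in `insert y B`, and it meets `x`.
  have hC_eq := hC.eq_fundCircuit_of_subset hB.indep hCyB
  refine ⟨B, hB, hCB ⟨hx, hxy⟩, hyB, hB.exchange_isBase_of_indep hyB ?_⟩
  rw [indep_iff_forall_subset_not_isCircuit (Set.insert_subset (hC.subset_ground hy)
    (Set.sdiff_subset.trans hB.subset_ground))]
  intro C' hC'sub hC'
  have hC'C : C' = C := hC_eq ▸ hC'.eq_fundCircuit_of_subset hB.indep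
    (hC'sub.trans (Set.insert_subset_insert Set.sdiff_subset))
  subst hC'C
  exact ((Set.mem_insert_iff.1 (hC'sub hx)).resolve_left hxy).2 rfl

lemma IsBase.sharesCircuit_of_exchange (hB : M.IsBase B) (hy : y ∉ B)
    (hB' : M.IsBase (insert y (B \ {x}))) : M.SharesCircuit x y := by
  have hyE : y ∈ M.E := hB'.subset_ground (Set.mem_insert y _)
  have hC := hB.fundCircuit_isCircuit hyE hy
  refine ⟨_, hC, ?_, M.mem_fundCircuit y B⟩
  by_contra hx
  refine hC.not_indep (hB'.indep.subset fun z hz => ?_)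
  obtain rfl | hzB := M.fundCircuit_subset_insert y B hz
  · exact Set.mem_insert z _
  · exact Set.mem_insert_of_mem y ⟨hzB, fun h => hx (h ▸ hz)⟩

lemma setOf_out_ne_subset_ground :
    {x | (Quotient.mk (Relation.EqvGen.setoid M.SharesCircuit) x).out ≠ x} ⊆ M.E := fun x hx =>
  (eqvGen_sharesCircuit_eq_or_mem_ground
    (Quotient.mk_out (s := Relation.EqvGen.setoid _) x)).resolve_left hx |>.2

lemma eqvGen_sharesCircuit_mem_ground (h : Relation.EqvGen M.SharesCircuit x y)
    (hx : x ∈ M.E) : y ∈ M.E :=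
  (eqvGen_sharesCircuit_eq_or_mem_ground h).elim (· ▸ hx) And.right

section Span

variable [DecidableEq α] {R : Type*} [Ring R]

lemma singleDiffSpan_sharesCircuit_le_vectorSpan :
    singleDiffSpan R M.SharesCircuit ≤
      vectorSpan R {v : α → R | ∃ B, M.IsBase B ∧ v = B.indicator 1} := by
  refine span_le.2 ?_
  rintro _ ⟨x, y, ⟨C, hC, hx, hy⟩, rfl⟩
  obtain rfl | hxy := eq_or_ne x y
  · simp
  obtain ⟨B, hB, hxB, hyB, hB'⟩ := hC.exists_isBase_exchange hx hy hxy
  rw [← Set.indicator_one_sub_indicator_one_insert_sdiff hxB hyB]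
  exact vsub_mem_vectorSpan R ⟨B, hB, rfl⟩ ⟨_, hB', rfl⟩

lemma IsBase.indicator_sub_indicator_mem_singleDiffSpan [M.RankFinite] (hB : M.IsBase B)
    (hB' : M.IsBase B') :
    B.indicator (1 : α → R) - B'.indicator 1 ∈ singleDiffSpan R M.SharesCircuit := by
  induction h : (B \ B').ncard generalizing B with
  | zero =>
    rw [Set.ncard_eq_zero (hB.finite.subset Set.sdiff_subset), Set.sdiff_eq_empty] at h
    simp [hB.eq_of_subset_isBase hB' h]
  | succ n ih =>
    obtain ⟨x, hx⟩ : (B \ B').Nonempty := Set.nonempty_of_ncard_ne_zero (by omega)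
    obtain ⟨y, hy, hB₁⟩ := hB.exchange hB' hx
    have hcard : (insert y (B \ {x}) \ B').ncard = n := by
      rw [Set.insert_sdiff_of_mem _ hy.1, Set.sdiff_sdiff_comm,
        Set.ncard_sdiff_singleton_of_mem hx, h, Nat.add_sub_cancel]
    have hstep := single_sub_single_mem_singleDiffSpan (R := R)
      (hB.sharesCircuit_of_exchange hy.2 hB₁)
    rw [← Set.indicator_one_sub_indicator_one_insert_sdiff hx.1 hy.2] at hstep
    simpa using add_mem hstep (ih hB₁ hcard)

lemma vectorSpan_setOf_isBase_indicator [M.RankFinite] :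
    vectorSpan R {v : α → R | ∃ B, M.IsBase B ∧ v = B.indicator 1} =
      singleDiffSpan R M.SharesCircuit := by
  refine le_antisymm ?_ singleDiffSpan_sharesCircuit_le_vectorSpan
  rw [vectorSpan_def]
  refine span_le.2 ?_
  rintro _ ⟨_, ⟨B, hB, rfl⟩, _, ⟨B', hB', rfl⟩, rfl⟩
  exact hB.indicator_sub_indicator_mem_singleDiffSpan hB'

end Span

end Matroid

/-- The dimension of the matroid base polytope of a matroid `M` on `n` elements equals
`n - κ(M)`, where `κ(M)` is the number of connected components of `M`. -/
theorem dim_basePolytope (n : ℕ) (M : Matroid ℕ) (hE : M.E = Set.Icc 1 n) :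
    Module.finrank ℝ (affineSpan ℝ (basePolytope M)).direction = n - numComponents M := by
  have : M.Finite := ⟨hE ▸ Set.finite_Icc 1 n⟩
  let s := Relation.EqvGen.setoid M.SharesCircuit
  have hcount : {x | (Quotient.mk s x).out ≠ x}.ncard + numComponents M = n := by
    have hn : M.E.ncard = n := by simp [hE]
    rw [← Set.inter_eq_right.2 setOf_out_ne_subset_ground, ← hn]
    exact s.ncard_sep_out_ne_add_ncard_classes M.ground_finite
      fun _ _ => eqvGen_sharesCircuit_mem_ground
  rw [basePolytope, affineSpan_convexHull, direction_affineSpan,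
    vectorSpan_setOf_isBase_indicator, ← singleDiffSpan_eqvGen]
  change Module.finrank ℝ (singleDiffSpan ℝ s) = _
  rw [finrank_singleDiffSpan_setoid s]
  omega
end

section
/- For 0 < r < n, the following Schur polynomial identity holds: Σ_{i=0}^{r} (-1)^i C(n,i) s_h(1^{r-i}) = C(n-2, r-1), where h = (n-r, 1^{r-1}) is the hook partition and s_h(1^{m}) denotes the Schur polynomial of shape h evaluated at m variables all equal to 1 (with s_h(1^m) = 0 if m < r). -/
/-!
For `i ≥ 1` the term vanishes: the first column needs `r` strictly increasing entries from
`{1, …, r - i}`. In the term `i = 0` the first column is forced to be `1, …, r`, so a tableau is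
determined by the rest of its first row, a weakly increasing word `w₀ ≤ ⋯ ≤ w_{k-1}` in
`{1, …, r}` with `k = n - r - 1`. Stars and bars: `j ↦ w_j + j` is strictly increasing, and these
shifted words are exactly the `k`-subsets of `{1, …, n - 2}`, which gives
`C(n - 2, k) = C(n - 2, r - 1)`.
-/

/-- The cells of the Young diagram of the hook partition `h = (n-r, 1^{r-1})`:
a first row of length `n - r` and a first column of length `r` (cells are `(row, col)`,
`0`-indexed). -/
def hookCells (n r : ℕ) : Set (ℕ × ℕ) :=
  {c | (c.1 = 0 ∧ c.2 < n - r) ∨ (c.2 = 0 ∧ c.1 < r)}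

/-- `s_h(1^m)` for the hook `h = (n-r, 1^{r-1})`: the number of semistandard Young tableaux
of shape `h` with entries in `{1, …, m}`. -/
noncomputable def ssytHookCount (n r m : ℕ) : ℕ :=
  Set.ncard {T : ℕ × ℕ → ℕ |
    (∀ p ∈ hookCells n r, T p ∈ Set.Icc 1 m) ∧
    (∀ p, p ∉ hookCells n r → T p = 0) ∧
    (∀ i j, (i, j + 1) ∈ hookCells n r → T (i, j) ≤ T (i, j + 1)) ∧
    (∀ i j, (i + 1, j) ∈ hookCells n r → T (i, j) < T (i + 1, j))}

open Set

theorem StrictMonoOn.add_sub_le_nat {f : ℕ → ℕ} {k a b : ℕ} (hf : StrictMonoOn f (Iio k))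
    (hab : a ≤ b) (hb : b < k) : f a + (b - a) ≤ f b := by
  induction b, hab using Nat.le_induction with
  | base => simp
  | succ b hab ih =>
    have hstep := hf (show b ∈ Iio k by rw [mem_Iio]; omega) hb (Nat.lt_succ_self b)
    have := ih (by omega)
    omega

theorem StrictMonoOn.eqOn_of_image_Iio_eq {α : Type*} [LinearOrder α] {f g : ℕ → α} {k : ℕ}
    (hf : StrictMonoOn f (Iio k)) (hg : StrictMonoOn g (Iio k))
    (h : f '' Iio k = g '' Iio k) : EqOn f g (Iio k) := by
  have hf' : StrictMono fun j : Fin k => f j := fun a b hab => hf a.2 b.2 hab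
  have hg' : StrictMono fun j : Fin k => g j := fun a b hab => hg a.2 b.2 hab
  have hfg : (fun j : Fin k => f j) = fun j : Fin k => g j := by
    have hrange (φ : ℕ → α) : range (fun j : Fin k => φ j) = φ '' Iio k := by
      ext; simp [Fin.exists_iff]
    rw [← hf'.range_inj hg', hrange, hrange, h]
  exact fun j hj => congrFun hfg ⟨j, hj⟩

def hookTableaux (n r m : ℕ) : Set (ℕ × ℕ → ℕ) :=
  {T : ℕ × ℕ → ℕ |
    (∀ p ∈ hookCells n r, T p ∈ Set.Icc 1 m) ∧
    (∀ p, p ∉ hookCells n r → T p = 0) ∧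
    (∀ i j, (i, j + 1) ∈ hookCells n r → T (i, j) ≤ T (i, j + 1)) ∧
    (∀ i j, (i + 1, j) ∈ hookCells n r → T (i, j) < T (i + 1, j))}

theorem ssytHookCount_eq_ncard (n r m : ℕ) :
    ssytHookCount n r m = (hookTableaux n r m).ncard :=
  rfl

namespace hookTableaux

variable {n r m : ℕ} {T T' : ℕ × ℕ → ℕ}

theorem col_strictMonoOn (hT : T ∈ hookTableaux n r m) :
    StrictMonoOn (fun i => T (i, 0)) (Iio r) :=
  strictMonoOn_of_lt_add_one ordConnected_Iio fun i _ _ hi => hT.2.2.2 i 0 (Or.inr ⟨rfl, hi⟩)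

theorem row_monotoneOn (hT : T ∈ hookTableaux n r m) :
    MonotoneOn (fun j => T (0, j)) (Iio (n - r)) :=
  monotoneOn_of_le_add_one ordConnected_Iio fun j _ _ hj => hT.2.2.1 0 j (Or.inl ⟨rfl, hj⟩)

theorem add_one_le_col (hT : T ∈ hookTableaux n r m) {i : ℕ} (hi : i < r) :
    i + 1 ≤ T (i, 0) := by
  have hcorner := (hT.1 (0, 0) (Or.inr ⟨rfl, by omega⟩)).1
  have := (col_strictMonoOn hT).add_sub_le_nat (Nat.zero_le i) hi
  omega

theorem eq_empty_of_lt (h : m < r) : hookTableaux n r m = ∅ :=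
  eq_empty_of_forall_notMem fun T hT => by
    have hlow := add_one_le_col hT (i := r - 1) (by omega)
    have hhigh := (hT.1 (r - 1, 0) (Or.inr ⟨rfl, by omega⟩)).2
    omega

theorem col_eq (hT : T ∈ hookTableaux n r r) {i : ℕ} (hi : i < r) : T (i, 0) = i + 1 := by
  have hlow := add_one_le_col hT hi
  have hchain := (col_strictMonoOn hT).add_sub_le_nat (a := i) (b := r - 1) (by omega) (by omega)
  have hhigh := (hT.1 (r - 1, 0) (Or.inr ⟨rfl, by omega⟩)).2
  omega

theorem eq_of_row_eq (hr : 0 < r) (hT : T ∈ hookTableaux n r r) (hT' : T' ∈ hookTableaux n r r)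
    (h : ∀ j, j + 1 < n - r → T (0, j + 1) = T' (0, j + 1)) : T = T' := by
  funext ⟨i, j⟩
  by_cases hp : (i, j) ∈ hookCells n r
  · rcases j with _ | j
    · have hi : i < r := by rcases hp with ⟨rfl, _⟩ | ⟨_, hi⟩ <;> omega
      rw [col_eq hT hi, col_eq hT' hi]
    · obtain ⟨rfl, hj⟩ : i = 0 ∧ j + 1 < n - r := by simpa [hookCells] using hp
      exact h j hj
  · rw [hT.2.1 _ hp, hT'.2.1 _ hp]

theorem shiftedRow_strictMonoOn (hT : T ∈ hookTableaux n r m) :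
    StrictMonoOn (fun j => T (0, j + 1) + j) (Iio (n - r - 1)) := by
  intro a ha b hb hab
  rw [mem_Iio] at ha hb
  have := row_monotoneOn hT (show a + 1 ∈ Iio (n - r) by rw [mem_Iio]; omega)
    (show b + 1 ∈ Iio (n - r) by rw [mem_Iio]; omega) (by omega)
  dsimp only at this ⊢
  omega

end hookTableaux

def rowCode (n r : ℕ) (T : ℕ × ℕ → ℕ) : Finset ℕ :=
  (Finset.range (n - r - 1)).image fun j => T (0, j + 1) + j

def hookTableauOfRow (n r : ℕ) (w : ℕ → ℕ) : ℕ × ℕ → ℕ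
  | (i, 0) => if i < r then i + 1 else 0
  | (0, j + 1) => if j + 1 < n - r then w j else 0
  | _ => 0

section

variable {n r : ℕ}

theorem hookTableauOfRow_mem (hr : 0 < r) {w : ℕ → ℕ} (hw : MonotoneOn w (Iio (n - r - 1)))
    (hw' : ∀ j < n - r - 1, w j ∈ Icc 1 r) : hookTableauOfRow n r w ∈ hookTableaux n r r := by
  refine ⟨?_, ?_, ?_, ?_⟩
  · rintro ⟨i, _ | j⟩ hp
    · have hi : i < r := by rcases hp with ⟨rfl, _⟩ | ⟨_, hi⟩ <;> omega
      simp [hookTableauOfRow, hi]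
    · obtain ⟨rfl, hj⟩ : i = 0 ∧ j + 1 < n - r := by simpa [hookCells] using hp
      simpa [hookTableauOfRow, hj] using hw' j (by omega)
  · rintro ⟨i, _ | j⟩ hp
    · have hi : ¬ i < r := fun hi => hp (Or.inr ⟨rfl, hi⟩)
      simp [hookTableauOfRow, hi]
    · rcases i with _ | i
      · have hj : ¬ j + 1 < n - r := fun hj => hp (Or.inl ⟨rfl, hj⟩)
        simp [hookTableauOfRow, hj]
      · rfl
  · intro i j hp
    obtain ⟨rfl, hj⟩ : i = 0 ∧ j + 1 < n - r := by simpa [hookCells] using hp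
    rcases j with _ | j
    · simpa [hookTableauOfRow, hr, hj] using (hw' 0 (by omega)).1
    · simpa [hookTableauOfRow, hj, show j + 1 < n - r by omega] using
        hw (show j ∈ Iio (n - r - 1) by rw [mem_Iio]; omega)
          (show j + 1 ∈ Iio (n - r - 1) by rw [mem_Iio]; omega) (Nat.le_succ j)
  · intro i j hp
    obtain ⟨rfl, hi⟩ : j = 0 ∧ i + 1 < r := by simpa [hookCells] using hp
    simp [hookTableauOfRow, hi, show i < r by omega]

theorem rowCode_mapsTo :
    MapsTo (rowCode n r) (hookTableaux n r r)
      (Finset.powersetCard (n - r - 1) (Finset.Icc 1 (n - 2))) := by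
  intro T hT
  rw [Finset.mem_coe, Finset.mem_powersetCard]
  constructor
  · intro x hx
    obtain ⟨j, hj, rfl⟩ := Finset.mem_image.1 hx
    rw [Finset.mem_range] at hj
    have := hT.1 (0, j + 1) (Or.inl ⟨rfl, by omega⟩)
    rw [Set.mem_Icc] at this
    rw [Finset.mem_Icc]
    omega
  · rw [rowCode, Finset.card_image_of_injOn, Finset.card_range]
    simpa using (hookTableaux.shiftedRow_strictMonoOn hT).injOn

theorem rowCode_injOn (hr : 0 < r) : InjOn (rowCode n r) (hookTableaux n r r) := by
  intro T hT T' hT' hcode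
  have hshift := (hookTableaux.shiftedRow_strictMonoOn hT).eqOn_of_image_Iio_eq
    (hookTableaux.shiftedRow_strictMonoOn hT')
    (by simpa [rowCode] using congrArg ((↑) : Finset ℕ → Set ℕ) hcode)
  refine hookTableaux.eq_of_row_eq hr hT hT' fun j hj => ?_
  simpa using hshift (show j ∈ Iio (n - r - 1) by rw [mem_Iio]; omega)

theorem rowCode_surjOn (hr : 0 < r) :
    SurjOn (rowCode n r) (hookTableaux n r r)
      (Finset.powersetCard (n - r - 1) (Finset.Icc 1 (n - 2))) := by
  intro s hs
  rw [Finset.mem_coe, Finset.mem_powersetCard] at hs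
  obtain ⟨hsub, hcard⟩ := hs
  set k := n - r - 1
  have hfin : (Set.ofPred (· ∈ s)).Finite := s.finite_toSet
  have hk : hfin.toFinset.card = k := by simpa using hcard
  set E := Nat.nth (· ∈ s)
  have hE : StrictMonoOn E (Iio k) := hk ▸ Nat.nth_strictMonoOn hfin
  have hEs : ∀ j < k, E j ∈ s := fun j hj => Nat.nth_mem_of_lt_card hfin (hk ▸ hj)
  have hbounds : ∀ j < k, j + 1 ≤ E j ∧ E j ≤ r + j := by
    intro j hj
    have hfirst := Finset.mem_Icc.1 (hsub (hEs 0 (by omega)))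
    have hlast := Finset.mem_Icc.1 (hsub (hEs (k - 1) (by omega)))
    have h0 := hE.add_sub_le_nat (Nat.zero_le j) hj
    have h1 := hE.add_sub_le_nat (show j ≤ k - 1 by omega) (by omega)
    omega
  refine ⟨hookTableauOfRow n r (fun j => E j - j), hookTableauOfRow_mem hr ?_ ?_, ?_⟩
  · intro a _ b hb hab
    have := hE.add_sub_le_nat hab hb
    dsimp only
    omega
  · intro j hj
    have := hbounds j hj
    rw [mem_Icc]
    omega
  · have hrow : ∀ j ∈ Finset.range k,
        hookTableauOfRow n r (fun j => E j - j) (0, j + 1) + j = E j := by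
      intro j hj
      rw [Finset.mem_range] at hj
      have := hbounds j hj
      simp only [hookTableauOfRow, show j + 1 < n - r by omega, if_true]
      omega
    rw [rowCode, Finset.image_congr hrow, ← Finset.coe_inj, Finset.coe_image, Finset.coe_range,
      ← hk, Nat.image_nth_Iio_card]
    rfl

end

theorem ncard_hookTableaux_self {n r : ℕ} (hr : 0 < r) (hrn : r < n) :
    (hookTableaux n r r).ncard = (n - 2).choose (r - 1) := by
  rw [BijOn.ncard_eq ⟨rowCode_mapsTo, rowCode_injOn hr, rowCode_surjOn hr⟩,
    ncard_coe_finset, Finset.card_powersetCard, Nat.card_Icc, Nat.add_sub_cancel,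
    ← Nat.choose_symm (by omega)]
  congr 1
  omega

/-- For `0 < r < n`, the Schur polynomial identity
`Σ_{i=0}^{r} (-1)^i C(n,i) s_h(1^{r-i}) = C(n-2, r-1)`, where `h = (n-r, 1^{r-1})` is the
hook partition and `s_h(1^m)` is the number of SSYT of shape `h` with entries in `{1,…,m}`. -/
theorem hook_schur_alternating_sum (n r : ℕ) (hr : 0 < r) (hrn : r < n) :
    (∑ i ∈ Finset.range (r + 1),
        (-1 : ℤ) ^ i * (Nat.choose n i : ℤ) * (ssytHookCount n r (r - i) : ℤ)) =
      (Nat.choose (n - 2) (r - 1) : ℤ) := by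
  rw [Finset.sum_eq_single_of_mem 0 (by simp)]
  · simp [ssytHookCount_eq_ncard, ncard_hookTableaux_self hr hrn]
  · intro i _ hi
    rw [ssytHookCount_eq_ncard, hookTableaux.eq_empty_of_lt (by omega : r - i < r)]
    simp
end
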